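/- arXiv:2007.03649 — 9 statements merged into one kernel-verified Lean document; each statement's English description precedes it below -/
import Mathlib

section
/- Let T be a linear operator on a complex Hilbert space H defined on a subspace D(T) ⊆ H. Let x ∈ D(T) with ‖x‖ = 1 and set z = ⟨Tx, x⟩. Then for every 0 < ε < 1 and every w ∈ W(T), the point εw + (1−ε)z belongs to the set {⟨Ty, y⟩ : y ∈ D(T), ‖y‖ = 1, and |⟨x, y⟩|² ≥ 1 − ε}. -/
open Filter Topology
open scoped InnerProductSpace

noncomputable section

variable {H : Type*} [NormedAddCommGroup H] [InnerProductSpace ℂ H] [CompleteSpace H]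

/-- The numerical range of an operator `T` defined on a subspace `D(T) = D ⊆ H`. -/
def numRange (D : Submodule ℂ H) (T : D →ₗ[ℂ] H) : Set ℂ :=
  {z : ℂ | ∃ x : D, ‖(x : H)‖ = 1 ∧ ⟪(x : H), T x⟫_ℂ = z}

/-! Rotate a unit vector `u` with `⟪u, T u⟫ = w` so that `c = ⟪x, u⟫` is real, and search for
`y` proportional to `Y = μ x + ν τ u`, with `μ, ν > 0`, `μ² + ν² = 1` and `|τ| = 1`. Then
`‖Y‖² = 1 + 2μνc Re τ` and
`⟪Y, T Y⟫ = μ² z + ν² w + μν (τ ⟪x, T u⟫ + τ̄ ⟪u, T x⟫)`.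
The phase `τ` is chosen so that the cross term, once `2μνc Re τ · z` is removed from it, is
`μνρ (w - z)` with `ρ ≥ 0`; so `⟪Y, T Y⟫ = ‖Y‖² z + (ν² + μνρ)(w - z)`, and the intermediate value
theorem gives `ν` with `ν² + μνρ = ε ‖Y‖²`. With this `ν`,
`|⟪x, Y⟫|² - (1 - ε) ‖Y‖² = μνρ + ν²c² ≥ 0`. -/

open ComplexConjugate

theorem Complex.exists_norm_eq_one_mul_eq_norm (w : ℂ) : ∃ δ : ℂ, ‖δ‖ = 1 ∧ δ * w = ‖w‖ := by
  refine ⟨Complex.exp (-w.arg * Complex.I), by exact_mod_cast Complex.norm_exp_ofReal_mul_I _, ?_⟩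
  conv_lhs => rw [← Complex.norm_mul_exp_arg_mul_I w]
  rw [mul_left_comm, ← Complex.exp_add]
  simp

theorem Complex.exists_norm_eq_one_mul_add_conj_mul_eq_nonneg (A B : ℂ) :
    ∃ τ : ℂ, ‖τ‖ = 1 ∧ ∃ ρ : ℝ, 0 ≤ ρ ∧ τ * A + conj τ * B = ρ := by
  obtain ⟨δ, hδ, hδA⟩ := Complex.exists_norm_eq_one_mul_eq_norm (A - conj B)
  set S := δ * A + conj δ * B
  -- `Im S = Im (δ * (A - conj B)) = 0`
  have hS : S = S.re := by
    refine Complex.ext rfl ?_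
    have := congrArg Complex.im hδA
    simp only [S, Complex.ofReal_im, Complex.mul_im, Complex.sub_re, Complex.sub_im,
      Complex.conj_re, Complex.conj_im, Complex.add_im] at this ⊢
    linarith
  rcases le_total 0 S.re with h | h
  · exact ⟨δ, hδ, _, h, hS⟩
  · refine ⟨-δ, by rwa [norm_neg], _, neg_nonneg.mpr h, ?_⟩
    rw [map_neg, neg_mul, neg_mul, ← neg_add, Complex.ofReal_neg, ← hS]

section

variable {E : Type*} [NormedAddCommGroup E] [InnerProductSpace ℂ E] {D : Submodule ℂ E}

def numRangeCap (D : Submodule ℂ E) (T : D →ₗ[ℂ] E) (x : D) (ε : ℝ) : Set ℂ :=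
  {c : ℂ | ∃ y : D, ‖(y : E)‖ = 1 ∧ ‖⟪(x : E), (y : E)⟫_ℂ‖ ^ 2 ≥ 1 - ε ∧ ⟪(y : E), T y⟫_ℂ = c}

theorem exists_norm_eq_one_inner_apply_eq_and_inner_eq_norm (T : D →ₗ[ℂ] E) (x : D) {u₀ : D}
    (hu₀ : ‖(u₀ : E)‖ = 1) :
    ∃ u : D, ‖(u : E)‖ = 1 ∧ ⟪(u : E), T u⟫_ℂ = ⟪(u₀ : E), T u₀⟫_ℂ ∧
      ⟪(x : E), (u : E)⟫_ℂ = ‖⟪(x : E), (u₀ : E)⟫_ℂ‖ := by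
  obtain ⟨δ, hδ, hδx⟩ := Complex.exists_norm_eq_one_mul_eq_norm ⟪(x : E), (u₀ : E)⟫_ℂ
  have hδδ : conj δ * δ = 1 := by rw [Complex.conj_mul', hδ]; norm_num
  refine ⟨δ • u₀, ?_, ?_, ?_⟩
  · rw [Submodule.coe_smul, norm_smul, hδ, hu₀, one_mul]
  · rw [map_smul, Submodule.coe_smul, inner_smul_left, inner_smul_right, ← mul_assoc, hδδ,
      one_mul]
  · rw [Submodule.coe_smul, inner_smul_right, hδx]

theorem inner_apply_smul_add_smul (T : D →ₗ[ℂ] E) (x u : D) (α β : ℂ) :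
    ⟪((α • x + β • u : D) : E), T (α • x + β • u)⟫_ℂ =
      conj α * α * ⟪(x : E), T x⟫_ℂ + conj α * β * ⟪(x : E), T u⟫_ℂ +
        conj β * α * ⟪(u : E), T x⟫_ℂ + conj β * β * ⟪(u : E), T u⟫_ℂ := by
  simp only [map_add, map_smul, Submodule.coe_add, Submodule.coe_smul, inner_add_left,
    inner_add_right, inner_smul_left, inner_smul_right]
  ring

theorem mem_numRangeCap_of_ne_zero (T : D →ₗ[ℂ] E) {x Y : D} {ε : ℝ} (hY : (Y : E) ≠ 0)
    {c : ℂ} (hc : ⟪(Y : E), T Y⟫_ℂ = ‖(Y : E)‖ ^ 2 * c)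
    (hxY : (1 - ε) * ‖(Y : E)‖ ^ 2 ≤ ‖⟪(x : E), (Y : E)⟫_ℂ‖ ^ 2) :
    c ∈ numRangeCap D T x ε := by
  have hpos : 0 < ‖(Y : E)‖ := norm_pos_iff.mpr hY
  have hpos' : (‖(Y : E)‖ : ℂ) ≠ 0 := by exact_mod_cast hpos.ne'
  refine ⟨(‖(Y : E)‖⁻¹ : ℂ) • Y, ?_, ?_, ?_⟩
  · simp [norm_smul, hpos.ne']
  · simp only [Submodule.coe_smul, inner_smul_right, norm_mul, mul_pow, norm_inv,
      Complex.norm_real, norm_norm]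
    rw [ge_iff_le, inv_pow, le_inv_mul_iff₀ (by positivity), mul_comm]
    exact hxY
  · simp only [map_smul, Submodule.coe_smul, inner_smul_left, inner_smul_right, hc, map_inv₀,
      Complex.conj_ofReal]
    field_simp

open Real in
theorem exists_sq_add_sq_eq_one_and_sq_add_mul_eq (k : ℝ) {ε : ℝ} (hε0 : 0 < ε) (hε1 : ε < 1) :
    ∃ μ ν : ℝ, 0 < μ ∧ 0 < ν ∧ μ ^ 2 + ν ^ 2 = 1 ∧ ν ^ 2 + μ * ν * k = ε := by
  set f : ℝ → ℝ := fun θ => sin θ ^ 2 + cos θ * sin θ * k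
  have hf : ContinuousOn f (Set.Icc 0 (π / 2)) := by fun_prop
  have hε : ε ∈ Set.Icc (f 0) (f (π / 2)) := by
    simp only [f, sin_zero, cos_pi_div_two, sin_pi_div_two]
    constructor <;> linarith
  obtain ⟨θ, ⟨hθ0, hθ1⟩, hθ⟩ := intermediate_value_Icc (by positivity) hf hε
  have hθ0' : 0 < θ := hθ0.lt_of_ne (by rintro rfl; simp [f] at hθ; linarith)
  have hθ1' : θ < π / 2 := hθ1.lt_of_ne (by rintro rfl; simp [f] at hθ; linarith)
  exact ⟨cos θ, sin θ, cos_pos_of_mem_Ioo ⟨by linarith, hθ1'⟩,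
    sin_pos_of_pos_of_lt_pi hθ0' (by linarith [pi_pos]), cos_sq_add_sin_sq θ, hθ⟩

theorem smul_add_one_sub_smul_mem_numRangeCap (T : D →ₗ[ℂ] E) {x u : D}
    (hx : ‖(x : E)‖ = 1) (hu : ‖(u : E)‖ = 1) {c : ℝ} (hxu : ⟪(x : E), (u : E)⟫_ℂ = c)
    {τ : ℂ} (hτ : ‖τ‖ = 1) {ρ : ℝ} (hρ : 0 ≤ ρ)
    (hτρ : τ * (⟪(x : E), T u⟫_ℂ - c * ⟪(x : E), T x⟫_ℂ) +
      conj τ * (⟪(u : E), T x⟫_ℂ - c * ⟪(x : E), T x⟫_ℂ) =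
        ρ * (⟪(u : E), T u⟫_ℂ - ⟪(x : E), T x⟫_ℂ))
    {ε : ℝ} (hε0 : 0 < ε) (hε1 : ε < 1) :
    (ε : ℂ) * ⟪(u : E), T u⟫_ℂ + (1 - ε) * ⟪(x : E), T x⟫_ℂ ∈ numRangeCap D T x ε := by
  obtain ⟨μ, ν, hμ, hν, hμν, hεμν⟩ :=
    exists_sq_add_sq_eq_one_and_sq_add_mul_eq (ρ - 2 * ε * c * τ.re) hε0 hε1
  set Y : D := (μ : ℂ) • x + ((ν : ℂ) * τ) • u
  have hττ : conj τ * τ = 1 := by rw [Complex.conj_mul', hτ]; norm_num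
  have hτre : τ + conj τ = 2 * τ.re := by rw [Complex.add_conj]; push_cast; ring
  have hux : ⟪(u : E), (x : E)⟫_ℂ = c := by rw [← inner_conj_symm, hxu, Complex.conj_ofReal]
  have hunit {v : D} (hv : ‖(v : E)‖ = 1) : ⟪(v : E), (v : E)⟫_ℂ = 1 := by
    rw [inner_self_eq_norm_sq_to_K, hv]; norm_num
  have hμνC : (μ : ℂ) ^ 2 + (ν : ℂ) ^ 2 = 1 := by exact_mod_cast hμν
  have hnorm : ‖(Y : E)‖ ^ 2 = 1 + 2 * μ * ν * c * τ.re := by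
    have h : ⟪(Y : E), D.subtype Y⟫_ℂ = _ := inner_apply_smul_add_smul D.subtype x u μ (ν * τ)
    simp only [Submodule.subtype_apply, hunit hx, hunit hu, hxu, hux, map_mul,
      Complex.conj_ofReal] at h
    have hYY : ⟪(Y : E), (Y : E)⟫_ℂ = ((1 + 2 * μ * ν * c * τ.re : ℝ) : ℂ) := by
      rw [h]; push_cast
      linear_combination (ν : ℂ) ^ 2 * hττ + hμνC + (μ * ν * c : ℂ) * hτre
    rw [← inner_self_eq_norm_sq (𝕜 := ℂ), hYY]
    exact Complex.ofReal_re _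
  have hεY : ε * ‖(Y : E)‖ ^ 2 = ν ^ 2 + μ * ν * ρ := by rw [hnorm]; linear_combination -hεμν
  have hY : (Y : E) ≠ 0 := by
    intro h
    rw [h, norm_zero] at hεY
    nlinarith [mul_nonneg (mul_nonneg hμ.le hν.le) hρ]
  refine mem_numRangeCap_of_ne_zero T hY ?_ ?_
  · have h : ⟪(Y : E), T Y⟫_ℂ = _ := inner_apply_smul_add_smul T x u μ (ν * τ)
    rw [h, ← Complex.ofReal_pow, hnorm]
    simp only [map_mul, Complex.conj_ofReal]
    have hεμνC : (ν : ℂ) ^ 2 + μ * ν * (ρ - 2 * ε * c * τ.re) = ε := by exact_mod_cast hεμν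
    push_cast
    linear_combination (μ * ν : ℂ) * hτρ + (ν : ℂ) ^ 2 * ⟪(u : E), T u⟫_ℂ * hττ
      + ⟪(x : E), T x⟫_ℂ * hμνC + (μ * ν * c * ⟪(x : E), T x⟫_ℂ : ℂ) * hτre
      + (⟪(u : E), T u⟫_ℂ - ⟪(x : E), T x⟫_ℂ) * hεμνC
  · have hxY : ⟪(x : E), (Y : E)⟫_ℂ = μ + ν * c * τ := by
      simp only [Y, Submodule.coe_add, Submodule.coe_smul, inner_add_right, inner_smul_right,
        hunit hx, hxu]
      ring
    have hoverlap : ‖⟪(x : E), (Y : E)⟫_ℂ‖ ^ 2 = μ ^ 2 + ν ^ 2 * c ^ 2 + 2 * μ * ν * c * τ.re := by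
      have : ((‖⟪(x : E), (Y : E)⟫_ℂ‖ ^ 2 : ℝ) : ℂ) =
          ((μ ^ 2 + ν ^ 2 * c ^ 2 + 2 * μ * ν * c * τ.re : ℝ) : ℂ) := by
        push_cast
        rw [← Complex.conj_mul', hxY]
        simp only [map_add, map_mul, Complex.conj_ofReal]
        linear_combination (ν * c : ℂ) ^ 2 * hττ + (μ * ν * c : ℂ) * hτre
      exact_mod_cast this
    rw [hoverlap, hnorm]
    nlinarith [mul_nonneg (mul_nonneg hμ.le hν.le) hρ, sq_nonneg (ν * c)]

end

/-- for `x ∈ D(T)` a unit vector with `z = ⟨Tx, x⟩`, every `0 < ε < 1` and every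
`w ∈ W(T)`, the point `ε w + (1-ε) z` is a numerical-range value `⟨Ty, y⟩` attained at a unit
vector `y ∈ D(T)` with `|⟨x, y⟩|² ≥ 1 - ε`. -/
theorem cap_theorem (D : Submodule ℂ H) (T : D →ₗ[ℂ] H)
    (x : D) (hx : ‖(x : H)‖ = 1) (z : ℂ) (hz : z = ⟪(x : H), T x⟫_ℂ)
    (ε : ℝ) (hε0 : 0 < ε) (hε1 : ε < 1) (w : ℂ) (hw : w ∈ numRange D T) :
    (ε : ℂ) * w + ((1 : ℂ) - (ε : ℂ)) * z ∈
      {c : ℂ | ∃ y : D, ‖(y : H)‖ = 1 ∧ ‖⟪(x : H), (y : H)⟫_ℂ‖ ^ 2 ≥ 1 - ε ∧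
        ⟪(y : H), T y⟫_ℂ = c} := by
  obtain ⟨u₀, hu₀, rfl⟩ := hw
  subst hz
  by_cases hwz : ⟪(u₀ : H), T u₀⟫_ℂ = ⟪(x : H), T x⟫_ℂ
  · refine ⟨x, hx, ?_, by rw [hwz]; ring⟩
    rw [inner_self_eq_norm_sq_to_K, hx]
    norm_num
    linarith
  obtain ⟨u, hu, huw, hxu⟩ := exists_norm_eq_one_inner_apply_eq_and_inner_eq_norm T x hu₀
  rw [← huw] at hwz ⊢
  set c := ‖⟪(x : H), (u₀ : H)⟫_ℂ‖
  have hwz_sub : ⟪(u : H), T u⟫_ℂ - ⟪(x : H), T x⟫_ℂ ≠ 0 := sub_ne_zero.mpr hwz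
  obtain ⟨τ, hτ, ρ, hρ, hτρ⟩ := Complex.exists_norm_eq_one_mul_add_conj_mul_eq_nonneg
    ((⟪(x : H), T u⟫_ℂ - c * ⟪(x : H), T x⟫_ℂ) / (⟪(u : H), T u⟫_ℂ - ⟪(x : H), T x⟫_ℂ))
    ((⟪(u : H), T x⟫_ℂ - c * ⟪(x : H), T x⟫_ℂ) / (⟪(u : H), T u⟫_ℂ - ⟪(x : H), T x⟫_ℂ))
  refine smul_add_one_sub_smul_mem_numRangeCap T hx hu hxu hτ hρ ?_ hε0 hε1
  rw [← hτρ]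
  field_simp
end
end

section
/- Let T be a linear operator on a complex Hilbert space H defined on a subspace D(T) ⊆ H. Suppose w ∈ W_e(T) and (z_n) is a sequence in W(T) with |z_n| → ∞. If there exist v ∈ ℂ and a subsequence (z_{n_j}) such that (z_{n_j} − w)/|z_{n_j} − w| → v, then the ray {w + tv : t ≥ 0} is contained in W_e(T). -/
open Filter Topology
open scoped InnerProductSpace

noncomputable section

variable {H : Type*} [NormedAddCommGroup H] [InnerProductSpace ℂ H] [CompleteSpace H]

/-- The essential numerical range of an operator `T` defined on a subspace `D(T) = D ⊆ H`. -/
def essNumRange (D : Submodule ℂ H) (T : D →ₗ[ℂ] H) : Set ℂ :=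
  {l : ℂ | ∃ x : ℕ → D, (∀ n, ‖(x n : H)‖ = 1) ∧
    (∀ y : H, Tendsto (fun n => ⟪(x n : H), y⟫_ℂ) atTop (𝓝 0)) ∧
    Tendsto (fun n => ⟪(x n : H), T (x n)⟫_ℂ) atTop (𝓝 l)}

/-!
Let `x` be a unit vector with `a = ⟪x, T x⟫` close to `w` (from a sequence witnessing `w ∈ W_e(T)`)
and `y` a unit vector with `⟪y, T y⟫ = z` far from `a`. Along `ε ↦ x + ε u y`, for a phase `u`
rotating both cross terms onto the direction `d = (z - a) / |z - a|`, the form satisfies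
`⟪v, T v⟫ = ‖v‖² a + (ε r + ε² |z - a|) d` with `r ≥ 0`. By the intermediate value theorem
the normalised vector has form value exactly `a + t d` for some `ε ≤ 2 √(t / |z - a|)`, which is
small, so these vectors are weakly as small as `x`. Finally `d → v`, since `z - a` and `z - w`
differ by a bounded amount while their length tends to infinity.
-/

theorem one_half_le_norm_add {F : Type*} [SeminormedAddCommGroup F] {x y : F} (hx : ‖x‖ = 1)
    (hy : ‖y‖ ≤ 1 / 2) : 1 / 2 ≤ ‖x + y‖ := by
  linarith [norm_le_add_norm_add x y]

section Direction

variable {E : Type*} [NormedAddCommGroup E] [NormedSpace ℝ E]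

theorem norm_inv_norm_smul_sub_inv_norm_smul_le {p : E} (hp : p ≠ 0) (q : E) :
    ‖‖p‖⁻¹ • p - ‖q‖⁻¹ • q‖ ≤ 2 * ‖p - q‖ / ‖p‖ := by
  have hp' : 0 < ‖p‖ := norm_pos_iff.2 hp
  have hsplit : ‖p‖⁻¹ • p - ‖q‖⁻¹ • q
      = ‖p‖⁻¹ • ((p - q) + (‖q‖ - ‖p‖) • (‖q‖⁻¹ • q)) := by
    rcases eq_or_ne q 0 with rfl | hq
    · simp
    · have hcoeff : ‖p‖⁻¹ * (‖q‖ - ‖p‖) * ‖q‖⁻¹ = ‖p‖⁻¹ - ‖q‖⁻¹ := by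
        field_simp [norm_ne_zero_iff.2 hq]
      rw [smul_add, smul_smul, smul_smul, hcoeff, sub_smul, smul_sub]
      abel
  have hunit : ‖‖q‖⁻¹ • q‖ ≤ 1 := by
    rw [norm_smul, norm_inv, norm_norm]
    exact inv_mul_le_one_of_le₀ le_rfl (norm_nonneg q)
  calc ‖‖p‖⁻¹ • p - ‖q‖⁻¹ • q‖
      ≤ ‖p‖⁻¹ * (‖p - q‖ + |‖q‖ - ‖p‖| * 1) := by
        rw [hsplit, norm_smul, norm_inv, norm_norm]
        gcongr
        refine (norm_add_le _ _).trans ?_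
        rw [norm_smul, Real.norm_eq_abs]
        gcongr
    _ ≤ ‖p‖⁻¹ * (‖p - q‖ + ‖p - q‖) := by
        rw [mul_one]
        gcongr
        exact (abs_norm_sub_norm_le q p).trans_eq (norm_sub_rev q p)
    _ = 2 * ‖p - q‖ / ‖p‖ := by ring

theorem Filter.Tendsto.inv_norm_smul_of_sub {ι : Type*} {l : Filter ι} {p q : ι → E} {v : E}
    (hv : Tendsto (fun i => ‖q i‖⁻¹ • q i) l (𝓝 v)) (hq : Tendsto (fun i => ‖q i‖) l atTop)
    (hpq : Tendsto (fun i => p i - q i) l (𝓝 0)) :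
    Tendsto (fun i => ‖p i‖⁻¹ • p i) l (𝓝 v) := by
  refine hv.congr_dist (squeeze_zero' (Eventually.of_forall fun _ => dist_nonneg) ?_
    (by simpa using ((tendsto_norm_zero.comp hpq).div_atTop hq).const_mul 2))
  filter_upwards [hq.eventually_gt_atTop 0] with i hi
  rw [dist_eq_norm, norm_sub_rev (p i), mul_div_assoc']
  exact norm_inv_norm_smul_sub_inv_norm_smul_le (norm_pos_iff.1 hi) (p i)

theorem exists_tendsto_inv_norm_smul_sub {a b : ℕ → E} {w v : E} (ha : Tendsto a atTop (𝓝 w))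
    (hb : Tendsto (fun j => ‖b j - w‖) atTop atTop)
    (hv : Tendsto (fun j => ‖b j - w‖⁻¹ • (b j - w)) atTop (𝓝 v)) (M : ℕ → ℝ) :
    ∃ j : ℕ → ℕ, (∀ k, M k ≤ ‖b (j k) - a k‖) ∧
      Tendsto (fun k => ‖b (j k) - a k‖⁻¹ • (b (j k) - a k)) atTop (𝓝 v) := by
  have hfar : ∀ k, ∀ᶠ j in atTop, k ≤ j ∧ M k ≤ ‖b j - a k‖ := fun k =>
    (eventually_ge_atTop k).and <| (tendsto_atTop_mono
      (fun j => by linarith [norm_sub_le_norm_sub_add_norm_sub (b j) (a k) w])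
      (tendsto_atTop_add_const_right _ (-‖a k - w‖) hb)).eventually_ge_atTop (M k)
  choose j hj using fun k => (hfar k).exists
  have hj_top : Tendsto j atTop atTop := tendsto_atTop_mono (fun k => (hj k).1) tendsto_id
  refine ⟨j, fun k => (hj k).2, (hv.comp hj_top).inv_norm_smul_of_sub (hb.comp hj_top) ?_⟩
  simpa using (tendsto_const_nhds (x := w)).sub ha

end Direction

open ComplexConjugate

theorem Complex.exists_norm_eq_one_mul_add_conj_mul_eq_ofReal (B C : ℂ) :
    ∃ u : ℂ, ‖u‖ = 1 ∧ ∃ r : ℝ, 0 ≤ r ∧ u * C + conj u * B = r := by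
  obtain ⟨c, hc, hcm⟩ := Complex.exists_norm_eq_mul_self (C - conj B)
  have hreal : c * C + conj c * B = (‖C - conj B‖ + 2 * (c * conj B).re : ℝ) := by
    have hconj : conj c * B = conj (c * conj B) := by rw [map_mul, Complex.conj_conj]
    rw [Complex.ofReal_add, ← Complex.add_conj, hcm, hconj]
    ring
  rcases le_total 0 (‖C - conj B‖ + 2 * (c * conj B).re) with hr | hr
  · exact ⟨c, hc, _, hr, hreal⟩
  · refine ⟨-c, by rw [norm_neg, hc], _, neg_nonneg.2 hr, ?_⟩
    rw [map_neg, Complex.ofReal_neg, ← hreal]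
    ring

section QuadraticForm

variable {E : Type*} [NormedAddCommGroup E] [InnerProductSpace ℂ E] {D : Submodule ℂ E}

theorem inner_map_add_smul (T : D →ₗ[ℂ] E) (x y : D) (β : ℂ) :
    ⟪((x + β • y : D) : E), T (x + β • y)⟫_ℂ = ⟪(x : E), T x⟫_ℂ + β * ⟪(x : E), T y⟫_ℂ
      + conj β * ⟪(y : E), T x⟫_ℂ + conj β * β * ⟪(y : E), T y⟫_ℂ := by
  simp only [Submodule.coe_add, Submodule.coe_smul, map_add, map_smul, inner_add_left,
    inner_add_right, inner_smul_left, inner_smul_right]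
  ring

theorem inner_map_inv_norm_smul (T : D →ₗ[ℂ] E) (v : D) :
    ⟪(((‖(v : E)‖⁻¹ : ℂ) • v : D) : E), T ((‖(v : E)‖⁻¹ : ℂ) • v)⟫_ℂ
      = ⟪(v : E), T v⟫_ℂ / (‖(v : E)‖ : ℂ) ^ 2 := by
  rw [Submodule.coe_smul, map_smul, inner_smul_left, inner_smul_right, map_inv₀,
    Complex.conj_ofReal]
  ring

theorem norm_inner_inv_norm_smul_add_le {x y : E} (hx : ‖x‖ = 1) (hy : ‖y‖ ≤ 1 / 2) (e : E) :
    ‖⟪(‖x + y‖⁻¹ : ℂ) • (x + y), e⟫_ℂ‖ ≤ 2 * (‖⟪x, e⟫_ℂ‖ + ‖y‖ * ‖e‖) := by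
  have hxy := one_half_le_norm_add hx hy
  rw [inner_smul_left, norm_mul, Complex.norm_conj, inner_add_left, ← Complex.ofReal_inv,
    Complex.norm_real, Real.norm_eq_abs, abs_inv, abs_norm]
  gcongr
  · rw [inv_le_comm₀ (by linarith) two_pos]
    linarith
  · exact (norm_add_le _ _).trans (add_le_add_right (norm_inner_le_norm y e) _)

theorem inner_map_add_smul_of_phase (T : D →ₗ[ℂ] E) {x y : D} (hx : ‖(x : E)‖ = 1)
    (hy : ‖(y : E)‖ = 1) {d u : ℂ} {r : ℝ} (hd : ‖d‖ = 1) (hu : ‖u‖ = 1)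
    (hur : u * (conj d * (⟪(x : E), T y⟫_ℂ - ⟪(x : E), T x⟫_ℂ * ⟪(x : E), (y : E)⟫_ℂ))
      + conj u * (conj d * (⟪(y : E), T x⟫_ℂ - ⟪(x : E), T x⟫_ℂ * ⟪(y : E), (x : E)⟫_ℂ)) = r)
    (ε : ℝ) :
    ⟪((x + ((ε : ℂ) * u) • y : D) : E), T (x + ((ε : ℂ) * u) • y)⟫_ℂ
      = ⟪((x + ((ε : ℂ) * u) • y : D) : E), ((x + ((ε : ℂ) * u) • y : D) : E)⟫_ℂ
          * ⟪(x : E), T x⟫_ℂ + ε * r * d + ε ^ 2 * (⟪(y : E), T y⟫_ℂ - ⟪(x : E), T x⟫_ℂ) := by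
  have hdd : conj d * d = 1 := by rw [Complex.conj_mul', hd]; norm_num
  have huu : conj u * u = 1 := by rw [Complex.conj_mul', hu]; norm_num
  have hxx : ⟪(x : E), (x : E)⟫_ℂ = 1 := by rw [inner_self_eq_norm_sq_to_K, hx]; norm_num
  have hyy : ⟪(y : E), (y : E)⟫_ℂ = 1 := by rw [inner_self_eq_norm_sq_to_K, hy]; norm_num
  have hT := inner_map_add_smul T x y ((ε : ℂ) * u)
  have hI := inner_map_add_smul D.subtype x y ((ε : ℂ) * u)
  simp only [Submodule.subtype_apply, map_mul, Complex.conj_ofReal] at hT hI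
  set a := ⟪(x : E), T x⟫_ℂ
  linear_combination hT - a * hI - a * hxx + ε * d * hur - ε ^ 2 * u * conj u * a * hyy
    - ε * (u * (⟪(x : E), T y⟫_ℂ - a * ⟪(x : E), (y : E)⟫_ℂ)
      + conj u * (⟪(y : E), T x⟫_ℂ - a * ⟪(y : E), (x : E)⟫_ℂ)) * hdd
    + ε ^ 2 * (⟪(y : E), T y⟫_ℂ - a) * huu

theorem exists_inner_map_add_smul_eq (T : D →ₗ[ℂ] E) {x y : D} (hx : ‖(x : E)‖ = 1)
    (hy : ‖(y : E)‖ = 1) {t δ : ℝ} (ht : 0 ≤ t) (hδ : 0 ≤ δ) (hδ1 : δ ≤ 1)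
    (htδ : 4 * t ≤ δ ^ 2 * ‖⟪(y : E), T y⟫_ℂ - ⟪(x : E), T x⟫_ℂ‖) :
    ∃ β : ℂ, ‖β‖ ≤ δ ∧ ⟪((x + β • y : D) : E), T (x + β • y)⟫_ℂ
      = (‖((x + β • y : D) : E)‖ : ℂ) ^ 2 * (⟪(x : E), T x⟫_ℂ
        + t • ‖⟪(y : E), T y⟫_ℂ - ⟪(x : E), T x⟫_ℂ‖⁻¹ • (⟪(y : E), T y⟫_ℂ - ⟪(x : E), T x⟫_ℂ)) := by
  set a := ⟪(x : E), T x⟫_ℂ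
  set m := ⟪(y : E), T y⟫_ℂ - a
  rcases eq_or_ne m 0 with hm | hm
  · exact ⟨0, by simpa using hδ, by simp [hm, hx, a]⟩
  obtain ⟨d, hd⟩ : ∃ d : ℂ, ‖m‖⁻¹ • m = d := ⟨_, rfl⟩
  rw [hd]
  have hd1 : ‖d‖ = 1 := hd ▸ norm_smul_inv_norm (𝕜 := ℝ) hm
  have hmd : m = ‖m‖ * d := by
    rw [← hd, ← Complex.real_smul, smul_smul, mul_inv_cancel₀ (norm_ne_zero_iff.2 hm), one_smul]
  obtain ⟨u, hu, r, hr, hur⟩ := Complex.exists_norm_eq_one_mul_add_conj_mul_eq_ofReal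
    (conj d * (⟪(y : E), T x⟫_ℂ - a * ⟪(y : E), (x : E)⟫_ℂ))
    (conj d * (⟪(x : E), T y⟫_ℂ - a * ⟪(x : E), (y : E)⟫_ℂ))
  set v : ℝ → D := fun ε => x + ((ε : ℂ) * u) • y
  have hv_le : ∀ ε ∈ Set.Icc 0 δ, ‖(v ε : E)‖ ≤ 2 := fun ε hε => calc
    ‖(v ε : E)‖ ≤ ‖(x : E)‖ + ‖((ε : ℂ) * u) • (y : E)‖ := norm_add_le _ _
    _ = 1 + ε := by
      rw [hx, norm_smul, hy, norm_mul, hu, Complex.norm_real, Real.norm_of_nonneg hε.1]; ring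
    _ ≤ 2 := by linarith [hε.2]
  obtain ⟨ε, hε, hεt⟩ : ∃ ε ∈ Set.Icc 0 δ, ε * r + ε ^ 2 * ‖m‖ - t * ‖(v ε : E)‖ ^ 2 = 0 := by
    refine intermediate_value_Icc hδ (Continuous.continuousOn (by fun_prop)) ⟨?_, ?_⟩
    · simpa [v, hx] using ht
    · have hsq : ‖(v δ : E)‖ ^ 2 ≤ 4 := by
        nlinarith [hv_le δ ⟨hδ, le_rfl⟩, norm_nonneg (v δ : E)]
      nlinarith [mul_le_mul_of_nonneg_left hsq ht, mul_nonneg hδ hr]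
  refine ⟨ε * u, ?_, ?_⟩
  · rw [norm_mul, hu, Complex.norm_real, Real.norm_of_nonneg hε.1, mul_one]
    exact hε.2
  · rw [inner_map_add_smul_of_phase T hx hy hd1 hu hur ε,
      inner_self_eq_norm_sq_to_K, RCLike.ofReal_eq_complex_ofReal, Complex.real_smul]
    have hεt' : (ε : ℂ) * r + ε ^ 2 * ‖m‖ = t * ‖(v ε : E)‖ ^ 2 := by
      exact_mod_cast (by linarith : ε * r + ε ^ 2 * ‖m‖ = t * ‖(v ε : E)‖ ^ 2)
    simp only [v] at hεt'
    linear_combination d * hεt' + (ε : ℂ) ^ 2 * hmd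

theorem exists_unit_inner_map_eq_of_norm_sub_ge (T : D →ₗ[ℂ] E) {x y : D} (hx : ‖(x : E)‖ = 1)
    (hy : ‖(y : E)‖ = 1) {t δ : ℝ} (ht : 0 ≤ t) (hδ : 0 ≤ δ) (hδ1 : δ ≤ 1 / 2)
    (htδ : 4 * t ≤ δ ^ 2 * ‖⟪(y : E), T y⟫_ℂ - ⟪(x : E), T x⟫_ℂ‖) :
    ∃ u : D, ‖(u : E)‖ = 1 ∧ ⟪(u : E), T u⟫_ℂ = ⟪(x : E), T x⟫_ℂ
        + t • ‖⟪(y : E), T y⟫_ℂ - ⟪(x : E), T x⟫_ℂ‖⁻¹ • (⟪(y : E), T y⟫_ℂ - ⟪(x : E), T x⟫_ℂ) ∧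
      ∀ e : E, ‖⟪(u : E), e⟫_ℂ‖ ≤ 2 * (‖⟪(x : E), e⟫_ℂ‖ + δ * ‖e‖) := by
  obtain ⟨β, hβ, hvalue⟩ := exists_inner_map_add_smul_eq T hx hy ht hδ (by linarith) htδ
  have hβy : ‖β • (y : E)‖ ≤ 1 / 2 := by rw [norm_smul, hy, mul_one]; linarith
  have hv : ‖((x + β • y : D) : E)‖ ≠ 0 := by
    rw [Submodule.coe_add, Submodule.coe_smul]
    linarith [one_half_le_norm_add hx hβy]
  refine ⟨(‖((x + β • y : D) : E)‖⁻¹ : ℂ) • (x + β • y), ?_, ?_, fun e => ?_⟩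
  · rw [Submodule.coe_smul]
    exact norm_smul_inv_norm (norm_ne_zero_iff.1 hv)
  · rw [inner_map_inv_norm_smul, hvalue,
      mul_div_cancel_left₀ _ (pow_ne_zero 2 (Complex.ofReal_ne_zero.2 hv))]
  · rw [Submodule.coe_smul, Submodule.coe_add, Submodule.coe_smul]
    refine (norm_inner_inv_norm_smul_add_le hx hβy e).trans ?_
    gcongr
    rw [norm_smul, hy, mul_one]
    exact hβ

end QuadraticForm

/-- if `w ∈ W_e(T)`, `(z n)` is a sequence in `W(T)` with `|z n| → ∞` and some
subsequence of `(z n - w)/|z n - w|` converges to `v`, then the ray `{w + t v : t ≥ 0}` is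
contained in `W_e(T)`. -/
theorem ray_in_essNumRange (D : Submodule ℂ H) (T : D →ₗ[ℂ] H)
    (w : ℂ) (hw : w ∈ essNumRange D T)
    (z : ℕ → ℂ) (hz : ∀ n, z n ∈ numRange D T)
    (hz' : Tendsto (fun n => ‖z n‖) atTop atTop)
    (v : ℂ) (φ : ℕ → ℕ) (hφ : StrictMono φ)
    (hv : Tendsto (fun j => (z (φ j) - w) / ((‖z (φ j) - w‖ : ℝ) : ℂ)) atTop (𝓝 v)) :
    {c : ℂ | ∃ t : ℝ, 0 ≤ t ∧ c = w + (t : ℂ) * v} ⊆ essNumRange D T := by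
  rintro _ ⟨t, ht, rfl⟩
  obtain ⟨x, hx1, hx_weak, hxw⟩ := hw
  choose y hy1 hyz using hz
  have hb : Tendsto (fun j => ‖z (φ j) - w‖) atTop atTop :=
    tendsto_atTop_mono (fun j => norm_sub_norm_le _ _)
      (tendsto_atTop_add_const_right _ (-‖w‖) (hz'.comp hφ.tendsto_atTop))
  have hdir (c : ℂ) : c / ((‖c‖ : ℝ) : ℂ) = ‖c‖⁻¹ • c := by
    rw [Complex.real_smul, Complex.ofReal_inv, div_eq_inv_mul]
  obtain ⟨j, hjM, hjv⟩ := exists_tendsto_inv_norm_smul_sub (b := fun j => z (φ j)) hxw hb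
    (by simpa only [hdir] using hv) (fun k => 4 * t * ((k : ℝ) + 2) ^ 2)
  have hδ : ∀ k : ℕ, 4 * t ≤ ((k : ℝ) + 2)⁻¹ ^ 2 * ‖z (φ (j k)) - ⟪(x k : H), T (x k)⟫_ℂ‖ :=
    fun k => calc
      4 * t = ((k : ℝ) + 2)⁻¹ ^ 2 * (4 * t * ((k : ℝ) + 2) ^ 2) := by field_simp
      _ ≤ _ := by gcongr; exact hjM k
  choose u hu1 hu hu_weak using fun k => exists_unit_inner_map_eq_of_norm_sub_ge T (hx1 k)
    (hy1 (φ (j k))) ht (by positivity) (by rw [one_div]; gcongr; simp)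
    ((hyz _).symm ▸ hδ k)
  have hδ_lim : Tendsto (fun k : ℕ => ((k : ℝ) + 2)⁻¹) atTop (𝓝 0) :=
    tendsto_inv_atTop_zero.comp (tendsto_atTop_add_const_right _ 2 tendsto_natCast_atTop_atTop)
  refine ⟨u, hu1, fun e => squeeze_zero_norm (fun k => hu_weak k e) ?_, ?_⟩
  · simpa using (((hx_weak e).norm.add (hδ_lim.mul_const ‖e‖)).const_mul 2)
  · simp only [hu, hyz]
    convert hxw.add (hjv.const_smul t) using 2
    rw [Complex.real_smul]
end
end

section
/- Let 𝔱 be a sesquilinear form on a complex Hilbert space H with domain D(𝔱). Suppose w ∈ W_e(𝔱) and (z_n) is a sequence in W(𝔱) with |z_n| → ∞. If there exist v ∈ ℂ and a subsequence (z_{n_j}) such that (z_{n_j} − w)/|z_{n_j} − w| → v, then the ray {w + tv : t ≥ 0} is contained in W_e(𝔱). -/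
/-
Write `w = lim 𝔱[x_n]` with unit, weakly null `x_n`, and `z_n = 𝔱[y_n]` with unit `y_n`; a
diagonal choice `n_j` makes `⟪x_{n_j}, y_{φ j}⟫ → 0`. For any two vectors `x, y` and `0 ≤ s ≤ 1`,
a phase `c` and an intermediate value argument give `β ≥ 0` with `β² ≤ s` and
`𝔱[√(1 - β²) x + β c y] = 𝔱[x] + s (𝔱[y] - 𝔱[x])`. With `s_j = t / |z_{φ j} - 𝔱[x_{n_j}]| → 0`
these values tend to `w + t v`, since the direction of `z_{φ j} - 𝔱[x_{n_j}]` tends to `v`. As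
`β_j → 0` and `x_{n_j}`, `y_{φ j}` are asymptotically orthogonal, the vectors are asymptotically
unit and weakly null, and normalising them gives the required sequence.
-/

open Filter Topology
open scoped InnerProductSpace

noncomputable section

variable {H : Type*} [NormedAddCommGroup H] [InnerProductSpace ℂ H] [CompleteSpace H]

/-- The numerical range of a sesquilinear form `𝔱` (linear in the first argument,
conjugate-linear in the second) defined on a subspace `D(𝔱) = D ⊆ H`. -/
def numRangeForm (D : Submodule ℂ H) (𝔱 : D →ₗ[ℂ] D →ₗ⋆[ℂ] ℂ) : Set ℂ :=
  {z : ℂ | ∃ x : D, ‖(x : H)‖ = 1 ∧ 𝔱 x x = z}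

/-- The essential numerical range of a sesquilinear form `𝔱` defined on a subspace
`D(𝔱) = D ⊆ H`. -/
def essNumRangeForm (D : Submodule ℂ H) (𝔱 : D →ₗ[ℂ] D →ₗ⋆[ℂ] ℂ) : Set ℂ :=
  {l : ℂ | ∃ x : ℕ → D, (∀ n, ‖(x n : H)‖ = 1) ∧
    (∀ y : H, Tendsto (fun n => ⟪(x n : H), y⟫_ℂ) atTop (𝓝 0)) ∧
    Tendsto (fun n => 𝔱 (x n) (x n)) atTop (𝓝 l)}

open ComplexConjugate

lemma exists_norm_eq_one_conj_mul_add_mul_eq (A B Z : ℂ) (hZ : Z ≠ 0) :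
    ∃ c : ℂ, ‖c‖ = 1 ∧ ∃ r : ℝ, 0 ≤ r ∧ conj c * A + c * B = r * Z := by
  let e : ℝ → ℂ := fun θ => Complex.exp (θ * Complex.I)
  let f : ℝ → ℝ := fun θ => ((conj (e θ) * A + e θ * B) / Z).im
  have hf : Continuous f := by fun_prop
  -- `e π = -e 0`, so `f` changes sign on `[0, π]`
  have hπ : f Real.pi = -f 0 := by
    simp only [f, e, Complex.exp_pi_mul_I, Complex.ofReal_zero, zero_mul, Complex.exp_zero,
      map_neg, map_one]
    rw [← Complex.neg_im, ← neg_div]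
    ring_nf
  obtain ⟨θ, hθ⟩ : ∃ θ, f θ = 0 := by
    rcases le_total (f 0) 0 with h | h
    · obtain ⟨θ, -, hθ⟩ := intermediate_value_Icc Real.pi_pos.le hf.continuousOn
        (show (0 : ℝ) ∈ Set.Icc (f 0) (f Real.pi) by constructor <;> linarith)
      exact ⟨θ, hθ⟩
    · obtain ⟨θ, -, hθ⟩ := intermediate_value_Icc' Real.pi_pos.le hf.continuousOn
        (show (0 : ℝ) ∈ Set.Icc (f Real.pi) (f 0) by constructor <;> linarith)
      exact ⟨θ, hθ⟩
  set g := (conj (e θ) * A + e θ * B) / Z with hg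
  have hg_real : ((g.re : ℝ) : ℂ) = g := Complex.ext rfl (by simpa using hθ.symm)
  have he : ‖e θ‖ = 1 := Complex.norm_exp_ofReal_mul_I θ
  rcases le_total 0 g.re with h | h
  · refine ⟨e θ, he, g.re, h, ?_⟩
    rw [hg_real, hg, div_mul_cancel₀ _ hZ]
  · refine ⟨-e θ, by rwa [norm_neg], -g.re, by linarith, ?_⟩
    rw [Complex.ofReal_neg, hg_real, hg, map_neg]
    field_simp
    ring

lemma exists_sq_add_sqrt_one_sub_sq_mul_eq {s r : ℝ} (hs : 0 ≤ s) (hr : 0 ≤ r) :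
    ∃ β : ℝ, 0 ≤ β ∧ β ^ 2 ≤ s ∧ β ^ 2 + √(1 - β ^ 2) * β * r = s := by
  let f : ℝ → ℝ := fun β => β ^ 2 + √(1 - β ^ 2) * β * r
  have hs_mem : s ∈ Set.Icc (f 0) (f √s) := by
    simp only [f, Real.sq_sqrt hs]
    constructor
    · simpa using hs
    · have : 0 ≤ √(1 - s) * √s * r := by positivity
      linarith
  obtain ⟨β, ⟨hβ₀, hβs⟩, hβ⟩ := intermediate_value_Icc (Real.sqrt_nonneg s)
    (by fun_prop : Continuous f).continuousOn hs_mem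
  exact ⟨β, hβ₀, (Real.le_sqrt hβ₀ hs).1 hβs, hβ⟩

lemma norm_div_norm_sub_div_norm_le {a : ℂ} (ha : a ≠ 0) (b : ℂ) :
    ‖a / ‖a‖ - b / ‖b‖‖ ≤ 2 * ‖a - b‖ / ‖a‖ := by
  have ha' : 0 < ‖a‖ := norm_pos_iff.2 ha
  rcases eq_or_ne b 0 with rfl | hb
  · simp [ha'.ne']
  have hb' : 0 < ‖b‖ := norm_pos_iff.2 hb
  have hsplit : a / ‖a‖ - b / ‖b‖ =
      (a - b) / ‖a‖ + ((‖b‖ - ‖a‖ : ℝ) / ‖a‖ : ℂ) * (b / ‖b‖) := by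
    have : (‖a‖ : ℂ) ≠ 0 := by exact_mod_cast ha'.ne'
    have : (‖b‖ : ℂ) ≠ 0 := by exact_mod_cast hb'.ne'
    field_simp
    push_cast
    ring
  calc ‖a / ‖a‖ - b / ‖b‖‖
      ≤ ‖(a - b) / ‖a‖‖ + ‖((‖b‖ - ‖a‖ : ℝ) / ‖a‖ : ℂ) * (b / ‖b‖)‖ :=
        hsplit ▸ norm_add_le _ _
    _ = ‖a - b‖ / ‖a‖ + |‖b‖ - ‖a‖| / ‖a‖ := by
        simp only [norm_div, norm_mul, Complex.norm_real, Real.norm_eq_abs, abs_norm,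
          div_self hb'.ne', mul_one]
    _ ≤ ‖a - b‖ / ‖a‖ + ‖a - b‖ / ‖a‖ := by
        gcongr
        rw [abs_sub_comm]
        exact abs_norm_sub_norm_le a b
    _ = 2 * ‖a - b‖ / ‖a‖ := by ring

lemma tendsto_norm_sub_atTop {ι E : Type*} [SeminormedAddCommGroup E] {l : Filter ι}
    {z W : ι → E} {w : E} (hz : Tendsto (fun j => ‖z j‖) l atTop) (hW : Tendsto W l (𝓝 w)) :
    Tendsto (fun j => ‖z j - W j‖) l atTop :=
  tendsto_atTop_mono (fun j => by linarith [norm_sub_norm_le (z j) (W j)])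
    (hW.norm.neg.add_atTop hz)

lemma tendsto_sub_div_norm_sub {ι : Type*} {l : Filter ι} {z W : ι → ℂ} {w v : ℂ}
    (hz : Tendsto (fun j => ‖z j‖) l atTop) (hW : Tendsto W l (𝓝 w))
    (hv : Tendsto (fun j => (z j - w) / ‖z j - w‖) l (𝓝 v)) :
    Tendsto (fun j => (z j - W j) / ‖z j - W j‖) l (𝓝 v) := by
  have hzW := tendsto_norm_sub_atTop hz hW
  have hdiff : Tendsto (fun j => (z j - W j) / ‖z j - W j‖ - (z j - w) / ‖z j - w‖) l (𝓝 0) := by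
    refine squeeze_zero_norm' ?_ (by simpa using
      ((hW.const_sub w).norm.const_mul 2).mul (tendsto_inv_atTop_zero.comp hzW))
    filter_upwards [hzW.eventually_gt_atTop 0] with j hj
    refine (norm_div_norm_sub_div_norm_le (norm_pos_iff.1 hj) _).trans_eq ?_
    rw [sub_sub_sub_cancel_left, div_eq_mul_inv, norm_sub_rev]
  simpa using hdiff.add hv

section Sesquilinear

variable {M : Type*} [AddCommGroup M] [Module ℂ M] (𝔱 : M →ₗ[ℂ] M →ₗ⋆[ℂ] ℂ)

lemma LinearMap.apply_smul_add_smul_self (a b : ℂ) (x y : M) :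
    𝔱 (a • x + b • y) (a • x + b • y) =
      a * conj a * 𝔱 x x + a * conj b * 𝔱 x y + b * conj a * 𝔱 y x + b * conj b * 𝔱 y y := by
  simp only [map_add, LinearMap.add_apply, map_smul, LinearMap.smul_apply, LinearMap.map_smulₛₗ,
    smul_eq_mul]
  ring

theorem exists_apply_self_eq_add_mul_sub (x y : M) {s : ℝ} (hs₀ : 0 ≤ s) (hs₁ : s ≤ 1) :
    ∃ β : ℝ, ∃ c : ℂ, 0 ≤ β ∧ β ^ 2 ≤ s ∧ ‖c‖ = 1 ∧
      𝔱 ((√(1 - β ^ 2) : ℂ) • x + (β * c) • y) ((√(1 - β ^ 2) : ℂ) • x + (β * c) • y) =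
        𝔱 x x + s * (𝔱 y y - 𝔱 x x) := by
  by_cases hZ : 𝔱 y y - 𝔱 x x = 0
  · exact ⟨0, 1, le_rfl, by simpa using hs₀, norm_one, by simp [hZ]⟩
  obtain ⟨c, hc, r, hr, hcr⟩ := exists_norm_eq_one_conj_mul_add_mul_eq (𝔱 x y) (𝔱 y x) _ hZ
  obtain ⟨β, hβ₀, hβs, hβ⟩ := exists_sq_add_sqrt_one_sub_sq_mul_eq hs₀ hr
  refine ⟨β, c, hβ₀, hβs, hc, ?_⟩
  have hα : (√(1 - β ^ 2) : ℂ) ^ 2 = 1 - β ^ 2 := by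
    exact_mod_cast Real.sq_sqrt (by linarith)
  have hcc : c * conj c = 1 := by
    rw [Complex.mul_conj, Complex.normSq_eq_norm_sq, hc]; norm_num
  have hβ' : (β : ℂ) ^ 2 + √(1 - β ^ 2) * β * r = s := by exact_mod_cast hβ
  rw [LinearMap.apply_smul_add_smul_self]
  simp only [map_mul, Complex.conj_ofReal]
  linear_combination 𝔱 x x * hα + (β : ℂ) ^ 2 * 𝔱 y y * hcc + √(1 - β ^ 2) * β * hcr +
    (𝔱 y y - 𝔱 x x) * hβ'

end Sesquilinear

section InnerProductSpace

variable {E : Type*} [NormedAddCommGroup E] [InnerProductSpace ℂ E]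

lemma abs_norm_smul_add_smul_sub_one_le {x y : E} (hx : ‖x‖ = 1) (hy : ‖y‖ = 1) {a b : ℂ}
    (hab : ‖a‖ ^ 2 + ‖b‖ ^ 2 = 1) : |‖a • x + b • y‖ - 1| ≤ ‖⟪x, y⟫_ℂ‖ := by
  have hcross : |2 * RCLike.re ⟪a • x, b • y⟫_ℂ| ≤ ‖⟪x, y⟫_ℂ‖ := by
    rw [abs_mul, abs_two, inner_smul_left, inner_smul_right]
    calc 2 * |RCLike.re (conj a * (b * ⟪x, y⟫_ℂ))|
        ≤ 2 * (‖a‖ * ‖b‖ * ‖⟪x, y⟫_ℂ‖) := by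
          gcongr
          refine (RCLike.abs_re_le_norm _).trans_eq ?_
          simp only [norm_mul, RCLike.norm_conj, mul_assoc]
      _ ≤ ‖⟪x, y⟫_ℂ‖ := by
          nlinarith [sq_nonneg (‖a‖ - ‖b‖), norm_nonneg ⟪x, y⟫_ℂ]
  have hsq : ‖a • x + b • y‖ ^ 2 - 1 = 2 * RCLike.re ⟪a • x, b • y⟫_ℂ := by
    rw [norm_add_sq (𝕜 := ℂ), norm_smul, norm_smul, hx, hy]
    linear_combination hab
  have hn := norm_nonneg (a • x + b • y)
  calc |‖a • x + b • y‖ - 1| ≤ |‖a • x + b • y‖ - 1| * (‖a • x + b • y‖ + 1) := by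
        nlinarith [abs_nonneg (‖a • x + b • y‖ - 1)]
    _ = |‖a • x + b • y‖ ^ 2 - 1| := by
        rw [← abs_of_nonneg (by linarith : 0 ≤ ‖a • x + b • y‖ + 1), ← abs_mul]
        ring_nf
    _ ≤ ‖⟪x, y⟫_ℂ‖ := hsq ▸ hcross

lemma tendsto_inner_smul_add_smul_zero {ι : Type*} {l : Filter ι} {x y : ι → E} {a b : ι → ℂ}
    (h : E) (hx : Tendsto (fun j => ⟪x j, h⟫_ℂ) l (𝓝 0)) (ha : ∀ j, ‖a j‖ ≤ 1)
    (hy : ∀ j, ‖y j‖ ≤ 1) (hb : Tendsto b l (𝓝 0)) :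
    Tendsto (fun j => ⟪a j • x j + b j • y j, h⟫_ℂ) l (𝓝 0) := by
  have hbound : ∀ j, ‖⟪a j • x j + b j • y j, h⟫_ℂ‖ ≤ ‖⟪x j, h⟫_ℂ‖ + ‖b j‖ * ‖h‖ := by
    intro j
    rw [inner_add_left, inner_smul_left, inner_smul_left]
    refine (norm_add_le _ _).trans (add_le_add ?_ ?_) <;> rw [norm_mul, RCLike.norm_conj]
    · exact mul_le_of_le_one_left (norm_nonneg _) (ha j)
    · calc ‖b j‖ * ‖⟪y j, h⟫_ℂ‖ ≤ ‖b j‖ * (‖y j‖ * ‖h‖) := by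
            gcongr; exact norm_inner_le_norm _ _
        _ ≤ ‖b j‖ * ‖h‖ := by
            gcongr; exact mul_le_of_le_one_left (norm_nonneg _) (hy j)
  refine squeeze_zero_norm hbound ?_
  simpa using hx.norm.add (hb.norm.mul_const ‖h‖)

lemma exists_tendsto_inner_comp_zero {x : ℕ → E}
    (hx : ∀ h : E, Tendsto (fun n => ⟪x n, h⟫_ℂ) atTop (𝓝 0)) (y : ℕ → E) :
    ∃ n : ℕ → ℕ, Tendsto n atTop atTop ∧ Tendsto (fun j => ⟪x (n j), y j⟫_ℂ) atTop (𝓝 0) := by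
  have hn : ∀ j : ℕ, ∃ N, j ≤ N ∧ ‖⟪x N, y j⟫_ℂ‖ < 1 / (j + 1) := fun j =>
    ((eventually_ge_atTop j).and ((tendsto_zero_iff_norm_tendsto_zero.1 (hx (y j)))
      |>.eventually_lt_const Nat.one_div_pos_of_nat)).exists
  choose n hjn hn using hn
  exact ⟨n, tendsto_atTop_mono hjn tendsto_id,
    squeeze_zero_norm (fun j => (hn j).le) tendsto_one_div_add_atTop_nhds_zero_nat⟩

variable {D : Submodule ℂ E} {𝔱 : D →ₗ[ℂ] D →ₗ⋆[ℂ] ℂ}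

lemma mem_essNumRangeForm_of_tendsto_norm_one {u : ℕ → D} {l : ℂ}
    (hu : Tendsto (fun j => ‖(u j : E)‖) atTop (𝓝 1))
    (hweak : ∀ h : E, Tendsto (fun j => ⟪(u j : E), h⟫_ℂ) atTop (𝓝 0))
    (hl : Tendsto (fun j => 𝔱 (u j) (u j)) atTop (𝓝 l)) : l ∈ essNumRangeForm D 𝔱 := by
  obtain ⟨N, hN⟩ := eventually_atTop.1 (hu.eventually_ne one_ne_zero)
  let r : ℕ → ℝ := fun j => ‖(u (j + N) : E)‖⁻¹
  have hr : Tendsto (fun j => (r j : ℂ)) atTop (𝓝 1) := by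
    have := ((tendsto_add_atTop_iff_nat N).2 hu).inv₀ one_ne_zero
    rw [inv_one] at this
    simpa [r, Function.comp_def] using (Complex.continuous_ofReal.tendsto 1).comp this
  refine ⟨fun j => (r j : ℂ) • u (j + N), fun j => ?_, fun h => ?_, ?_⟩
  · simp [r, norm_smul, hN (j + N) (Nat.le_add_left N j)]
  · simpa [inner_smul_left] using hr.mul ((tendsto_add_atTop_iff_nat N).2 (hweak h))
  · have := (hr.mul hr).mul ((tendsto_add_atTop_iff_nat N).2 hl)
    rw [one_mul, one_mul] at this
    refine this.congr fun j => ?_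
    simp only [map_smul, LinearMap.smul_apply, LinearMap.map_smulₛₗ, smul_eq_mul,
      Complex.conj_ofReal]
    ring

theorem mem_essNumRangeForm_of_tendsto_add_mul_sub {x y : ℕ → D} {s : ℕ → ℝ} {l : ℂ}
    (hx : ∀ j, ‖(x j : E)‖ = 1) (hxw : ∀ h : E, Tendsto (fun j => ⟪(x j : E), h⟫_ℂ) atTop (𝓝 0))
    (hy : ∀ j, ‖(y j : E)‖ = 1) (hxy : Tendsto (fun j => ⟪(x j : E), (y j : E)⟫_ℂ) atTop (𝓝 0))
    (hs₀ : ∀ j, 0 ≤ s j) (hs₁ : ∀ j, s j ≤ 1) (hs : Tendsto s atTop (𝓝 0))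
    (hl : Tendsto (fun j => 𝔱 (x j) (x j) + s j * (𝔱 (y j) (y j) - 𝔱 (x j) (x j))) atTop (𝓝 l)) :
    l ∈ essNumRangeForm D 𝔱 := by
  choose β c hβ₀ hβs hc h𝔱 using
    fun j => exists_apply_self_eq_add_mul_sub 𝔱 (x j) (y j) (hs₀ j) (hs₁ j)
  set a : ℕ → ℂ := fun j => √(1 - β j ^ 2)
  set b : ℕ → ℂ := fun j => β j * c j
  have hβ₁ : ∀ j, β j ^ 2 ≤ 1 := fun j => (hβs j).trans (hs₁ j)
  have ha : ∀ j, ‖a j‖ = √(1 - β j ^ 2) := fun j => by simp [a]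
  have hb : ∀ j, ‖b j‖ = β j := fun j => by simp [b, hc, abs_of_nonneg (hβ₀ j)]
  have hab : ∀ j, ‖a j‖ ^ 2 + ‖b j‖ ^ 2 = 1 := fun j => by
    rw [ha, hb, Real.sq_sqrt (by linarith [hβ₁ j])]; ring
  have hb₀ : Tendsto b atTop (𝓝 0) := by
    refine squeeze_zero_norm (fun j => (Real.le_sqrt (norm_nonneg _) (hs₀ j)).2 ?_)
      (by simpa [Function.comp_def] using (Real.continuous_sqrt.tendsto 0).comp hs)
    rw [hb]; exact hβs j
  refine mem_essNumRangeForm_of_tendsto_norm_one (u := fun j => a j • x j + b j • y j) ?_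
    (fun h => ?_) (hl.congr fun j => (h𝔱 j).symm)
  · rw [tendsto_iff_norm_sub_tendsto_zero]
    refine squeeze_zero (fun j => norm_nonneg _) (fun j => ?_)
      (tendsto_zero_iff_norm_tendsto_zero.1 hxy)
    exact abs_norm_smul_add_smul_sub_one_le (hx j) (hy j) (hab j)
  · exact tendsto_inner_smul_add_smul_zero h (hxw h) (fun j => (ha j).trans_le
      (Real.sqrt_le_one.2 (by linarith [sq_nonneg (β j)]))) (fun j => (hy j).le) hb₀

end InnerProductSpace

/-- if `w ∈ W_e(𝔱)`, `(z n)` is a sequence in `W(𝔱)` with `|z n| → ∞`, and some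
subsequence of `(z n - w)/|z n - w|` converges to `v`, then the ray `{w + t v : t ≥ 0}` is
contained in `W_e(𝔱)`. -/
theorem ray_in_essNumRangeForm (D : Submodule ℂ H) (𝔱 : D →ₗ[ℂ] D →ₗ⋆[ℂ] ℂ)
    (w : ℂ) (hw : w ∈ essNumRangeForm D 𝔱)
    (z : ℕ → ℂ) (hz : ∀ n, z n ∈ numRangeForm D 𝔱)
    (hz' : Tendsto (fun n => ‖z n‖) atTop atTop)
    (v : ℂ) (φ : ℕ → ℕ) (hφ : StrictMono φ)
    (hv : Tendsto (fun j => (z (φ j) - w) / ((‖z (φ j) - w‖ : ℝ) : ℂ)) atTop (𝓝 v)) :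
    {c : ℂ | ∃ t : ℝ, 0 ≤ t ∧ c = w + (t : ℂ) * v} ⊆ essNumRangeForm D 𝔱 := by
  rintro _ ⟨t, ht, rfl⟩
  obtain ⟨x, hx, hxw, hxl⟩ := hw
  choose y hy hyz using hz
  obtain ⟨n, hn, hxy⟩ := exists_tendsto_inner_comp_zero hxw fun j => (y (φ j) : H)
  have hW : Tendsto (fun j => 𝔱 (x (n j)) (x (n j))) atTop (𝓝 w) := hxl.comp hn
  have hzφ : Tendsto (fun j => ‖z (φ j)‖) atTop atTop := hz'.comp hφ.tendsto_atTop
  set Z : ℕ → ℂ := fun j => z (φ j) - 𝔱 (x (n j)) (x (n j))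
  have hZ : Tendsto (fun j => ‖Z j‖) atTop atTop := tendsto_norm_sub_atTop hzφ hW
  have hlim : Tendsto (fun j => 𝔱 (x (n j)) (x (n j)) + t * (Z j / ‖Z j‖)) atTop
      (𝓝 (w + t * v)) :=
    hW.add (tendsto_const_nhds.mul (tendsto_sub_div_norm_sub hzφ hW hv))
  refine mem_essNumRangeForm_of_tendsto_add_mul_sub (x := x ∘ n) (y := y ∘ φ)
    (s := fun j => min (t / ‖Z j‖) 1) (fun j => hx _) (fun h => (hxw h).comp hn) (fun j => hy _)
    hxy (fun j => by positivity) (fun j => min_le_right _ _)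
    (squeeze_zero (fun j => by positivity) (fun j => min_le_left _ _)
      (tendsto_const_nhds.div_atTop hZ)) (hlim.congr' ?_)
  filter_upwards [hZ.eventually_ge_atTop (t + 1)] with j hj
  rw [min_eq_left ((div_le_one (by linarith)).2 (by linarith))]
  simp only [Function.comp_apply, hyz, Z]
  push_cast
  ring
end
end

section
/- Let T be a linear operator on a complex Hilbert space H defined on a subspace D(T) ⊆ H. If W_e(T) is nonempty and W(T) is an unbounded subset of ℂ, then W_e(T) is unbounded. -/
open Filter Topology
open scoped InnerProductSpace

noncomputable section

variable {H : Type*} [NormedAddCommGroup H] [InnerProductSpace ℂ H] [CompleteSpace H]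

/-!
Take unit vectors `x n ⇀ 0` with `⟪x n, T x n⟫ → l` and unit vectors `y` with `μ = ⟪y, T y⟫`
arbitrarily large. For `β` small, the quadratic form at `x n + β • y` is
`⟪x n, T x n⟫ + conj β ⟪y, T x n⟫ + |β|² μ` up to a vanishing term. Choosing the phase of `β`
so that the last two terms point in the same direction, and its modulus so that their sum has norm
exactly `R`, forces `|β|² ≤ R / |μ|`; hence `β → 0` as `|μ| → ∞`, the perturbed vectors are still
asymptotically unit and weakly null, and a convergent subsequence of the sums `s` on the sphere of
radius `R` yields `l + s ∈ W_e(T)` with `|s| = R`, for every `R ≥ 0`.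
-/

open ComplexConjugate

theorem exists_tendsto_atTop_tendsto_zero_diag {E : Type*} [SeminormedAddGroup E] {f : ℕ → ℕ → E}
    (hf : ∀ m, Tendsto (fun n => f n m) atTop (𝓝 0)) :
    ∃ k : ℕ → ℕ, Tendsto k atTop atTop ∧ Tendsto (fun m => f (k m) m) atTop (𝓝 0) := by
  have h : ∀ m : ℕ, ∃ n, m ≤ n ∧ ‖f n m‖ < 1 / ((m : ℝ) + 1) := fun m =>
    ((eventually_ge_atTop m).and
      ((hf m).norm.eventually (gt_mem_nhds (by simp only [norm_zero]; positivity)))).exists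
  choose k hkm hk using h
  exact ⟨k, tendsto_atTop_mono hkm tendsto_id,
    squeeze_zero_norm (fun m => (hk m).le) tendsto_one_div_add_atTop_nhds_zero_nat⟩

theorem exists_norm_eq_one_conj_mul_eq (c μ : ℂ) :
    ∃ ω : ℂ, ‖ω‖ = 1 ∧ conj ω * c * ‖μ‖ = ‖c‖ * μ := by
  rcases eq_or_ne c 0 with rfl | hc
  · exact ⟨1, by simp⟩
  rcases eq_or_ne μ 0 with rfl | hμ
  · exact ⟨1, by simp⟩
  refine ⟨c * conj μ / (‖c‖ * ‖μ‖), by simp [hc, hμ], ?_⟩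
  have hc' : (‖c‖ : ℂ) ≠ 0 := by simpa using hc
  have hμ' : (‖μ‖ : ℂ) ≠ 0 := by simpa using hμ
  simp only [map_div₀, map_mul, Complex.conj_conj, Complex.conj_ofReal]
  field_simp
  exact Complex.conj_mul' c

theorem exists_norm_conj_mul_add_eq (c μ : ℂ) (hμ : μ ≠ 0) {R : ℝ} (hR : 0 ≤ R) :
    ∃ β : ℂ, ‖β‖ ≤ √(R / ‖μ‖) ∧ ‖conj β * c + conj β * β * μ‖ = R := by
  have hμ' : 0 < ‖μ‖ := norm_pos_iff.2 hμ
  obtain ⟨b, ⟨hb0, hb⟩, hbR⟩ : ∃ b ∈ Set.Icc 0 √(R / ‖μ‖), b * ‖c‖ + b ^ 2 * ‖μ‖ = R := by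
    refine intermediate_value_Icc (Real.sqrt_nonneg _) (by fun_prop) ⟨by simpa using hR, ?_⟩
    rw [Real.sq_sqrt (by positivity), div_mul_cancel₀ _ hμ'.ne']
    nlinarith [Real.sqrt_nonneg (R / ‖μ‖), norm_nonneg c]
  obtain ⟨ω, hω, hωc⟩ := exists_norm_eq_one_conj_mul_eq c μ
  refine ⟨b * ω, by simpa [hω, abs_of_nonneg hb0] using hb, ?_⟩
  -- `ω` makes `conj β * c` a nonnegative multiple of `μ`, so the two terms cannot cancel.
  have hωω : conj ω * ω = 1 := by simp [Complex.conj_mul', hω]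
  have hs : conj (b * ω) * c + conj (b * ω) * (b * ω) * μ
      = ((b * ‖c‖ + b ^ 2 * ‖μ‖ : ℝ) : ℂ) * (μ / ‖μ‖) := by
    have hμc : (‖μ‖ : ℂ) ≠ 0 := by exact_mod_cast hμ'.ne'
    simp only [map_mul, Complex.conj_ofReal]
    field_simp
    push_cast
    linear_combination (b : ℂ) * hωc + (b : ℂ) ^ 2 * μ * ‖μ‖ * hωω
  rw [hs, hbR, norm_mul, norm_div, Complex.norm_real, Complex.norm_real, norm_norm,
    div_self hμ'.ne', mul_one, Real.norm_of_nonneg hR]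

section

variable {E : Type*} [NormedAddCommGroup E] [InnerProductSpace ℂ E]
variable (D : Submodule ℂ E) (T : D →ₗ[ℂ] E)

def IsEssNumRangeSeq (x : ℕ → D) (l : ℂ) : Prop :=
  (∀ n, ‖(x n : E)‖ = 1) ∧ (∀ y : E, Tendsto (fun n => ⟪(x n : E), y⟫_ℂ) atTop (𝓝 0)) ∧
    Tendsto (fun n => ⟪(x n : E), T (x n)⟫_ℂ) atTop (𝓝 l)

variable {D T}

theorem IsEssNumRangeSeq.comp {x : ℕ → D} {l : ℂ} (hx : IsEssNumRangeSeq D T x l) {k : ℕ → ℕ}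
    (hk : Tendsto k atTop atTop) : IsEssNumRangeSeq D T (x ∘ k) l :=
  ⟨fun n => hx.1 (k n), fun y => (hx.2.1 y).comp hk, hx.2.2.comp hk⟩

theorem mem_essNumRange_of_tendsto_norm {z : ℕ → D} {q : ℂ}
    (hnorm : Tendsto (fun n => ‖(z n : E)‖) atTop (𝓝 1))
    (hweak : ∀ y : E, Tendsto (fun n => ⟪(z n : E), y⟫_ℂ) atTop (𝓝 0))
    (hq : Tendsto (fun n => ⟪(z n : E), T (z n)⟫_ℂ) atTop (𝓝 q)) :
    q ∈ essNumRange D T := by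
  obtain ⟨N, hN⟩ := eventually_atTop.1 (hnorm.eventually (lt_mem_nhds one_pos))
  set r : ℕ → ℝ := fun n => ‖(z (n + N) : E)‖
  have hr : ∀ n, 0 < r n := fun n => hN _ (Nat.le_add_left N n)
  have hr_inv : Tendsto (fun n => ((r n)⁻¹ : ℂ)) atTop (𝓝 1) := by
    simpa using ((tendsto_add_atTop_iff_nat N).2 hnorm).ofReal.inv₀ one_ne_zero
  refine ⟨fun n => ((r n)⁻¹ : ℂ) • z (n + N), fun n => ?_, fun y => ?_, ?_⟩
  · simp [norm_smul, (hr n).ne', r]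
  · have h := hr_inv.mul ((tendsto_add_atTop_iff_nat N).2 (hweak y))
    rw [mul_zero] at h
    refine h.congr fun n => ?_
    rw [Submodule.coe_smul, inner_smul_left, map_inv₀, Complex.conj_ofReal]
  · have h := hr_inv.mul (hr_inv.mul ((tendsto_add_atTop_iff_nat N).2 hq))
    rw [one_mul, one_mul] at h
    refine h.congr fun n => ?_
    rw [map_smul, Submodule.coe_smul, inner_smul_left, inner_smul_right, map_inv₀,
      Complex.conj_ofReal]

theorem IsEssNumRangeSeq.add_mem_essNumRange {x : ℕ → D} {l : ℂ}
    (hx : IsEssNumRangeSeq D T x l) {u : ℕ → D} {s : ℂ}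
    (hu : Tendsto (fun n => (u n : E)) atTop (𝓝 0))
    (hxu : Tendsto (fun n => ⟪(x n : E), T (u n)⟫_ℂ) atTop (𝓝 0))
    (hs : Tendsto (fun n => ⟪(u n : E), T (x n)⟫_ℂ + ⟪(u n : E), T (u n)⟫_ℂ) atTop (𝓝 s)) :
    l + s ∈ essNumRange D T := by
  obtain ⟨hx1, hx2, hx3⟩ := hx
  refine mem_essNumRange_of_tendsto_norm (z := x + u) ?_ (fun y => ?_) ?_
  · have h : Tendsto (fun n => ‖(x n : E) + u n‖ - ‖(x n : E)‖) atTop (𝓝 0) :=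
      squeeze_zero_norm (fun n => by simpa using abs_norm_sub_norm_le ((x n : E) + u n) (x n))
        (by simpa using hu.norm)
    simpa [hx1] using h.add_const 1
  · simpa [inner_add_left] using (hx2 y).add (hu.inner tendsto_const_nhds)
  · have h := (hx3.add hxu).add hs
    simp only [add_zero] at h
    refine h.congr fun n => ?_
    simp only [Pi.add_apply, Submodule.coe_add, map_add, inner_add_left, inner_add_right]
    ring

theorem exists_seq_lt_norm_of_not_isBounded_numRange (hunb : ¬ Bornology.IsBounded (numRange D T)) :
    ∃ y : ℕ → D, (∀ m, ‖(y m : E)‖ = 1) ∧ ∀ m : ℕ, (m : ℝ) < ‖⟪(y m : E), T (y m)⟫_ℂ‖ := by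
  simp only [isBounded_iff_forall_norm_le, not_exists, not_forall, exists_prop, not_le] at hunb
  choose z hz hzm using fun m : ℕ => hunb (m : ℝ)
  choose y hy1 hyz using hz
  exact ⟨y, hy1, fun m => hyz m ▸ hzm m⟩

theorem IsEssNumRangeSeq.exists_add_mem_essNumRange_norm_eq
    (hunb : ¬ Bornology.IsBounded (numRange D T)) {x : ℕ → D} {l : ℂ}
    (hx : IsEssNumRangeSeq D T x l) {R : ℝ} (hR : 0 ≤ R) :
    ∃ s : ℂ, ‖s‖ = R ∧ l + s ∈ essNumRange D T := by
  obtain ⟨y, hy1, hμ⟩ := exists_seq_lt_norm_of_not_isBounded_numRange hunb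
  set μ : ℕ → ℂ := fun m => ⟪(y m : E), T (y m)⟫_ℂ
  -- Pairing `y m` with a late enough `x (k m)` makes the cross term `⟪x, T (β • y)⟫` negligible.
  obtain ⟨k, hk, hxTy⟩ := exists_tendsto_atTop_tendsto_zero_diag
    (f := fun n m => ⟪(x n : E), T (y m)⟫_ℂ) fun m => hx.2.1 _
  have hμ0 : ∀ m, μ m ≠ 0 := fun m => norm_pos_iff.1 ((Nat.cast_nonneg m).trans_lt (hμ m))
  choose β hβ hs using fun m =>
    exists_norm_conj_mul_add_eq ⟪(y m : E), T (x (k m))⟫_ℂ (μ m) (hμ0 m) hR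
  have hβ0 : Tendsto β atTop (𝓝 0) := by
    refine squeeze_zero_norm hβ ?_
    simpa using ((tendsto_const_nhds (x := R)).div_atTop
      (tendsto_atTop_mono (fun m => (hμ m).le) (tendsto_natCast_atTop_atTop (R := ℝ)))).sqrt
  obtain ⟨s, hsR, φ, hφ, hsφ⟩ :=
    (isCompact_sphere (0 : ℂ) R).tendsto_subseq fun m => mem_sphere_zero_iff_norm.2 (hs m)
  refine ⟨s, mem_sphere_zero_iff_norm.1 hsR,
    (hx.comp (hk.comp hφ.tendsto_atTop)).add_mem_essNumRange (u := fun j => β (φ j) • y (φ j))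
      ?_ ?_ ?_⟩
  · rw [tendsto_zero_iff_norm_tendsto_zero]
    simpa [norm_smul, hy1] using (hβ0.comp hφ.tendsto_atTop).norm
  · have h := (hβ0.mul hxTy).comp hφ.tendsto_atTop
    rw [zero_mul] at h
    refine h.congr fun n => ?_
    simp only [Function.comp_apply, map_smul, inner_smul_right]
  · refine hsφ.congr fun n => ?_
    simp only [Function.comp_apply, map_smul, Submodule.coe_smul, inner_smul_left,
      inner_smul_right, μ]
    ring

end

/-- if `W_e(T)` is nonempty and `W(T)` is unbounded, then `W_e(T)` is unbounded. -/
theorem essNumRange_unbounded_of_numRange_unbounded (D : Submodule ℂ H) (T : D →ₗ[ℂ] H)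
    (hne : (essNumRange D T).Nonempty)
    (hunb : ¬ Bornology.IsBounded (numRange D T)) :
    ¬ Bornology.IsBounded (essNumRange D T) := by
  obtain ⟨l, x, hx⟩ := hne
  rw [isBounded_iff_forall_norm_le]
  rintro ⟨C, hC⟩
  obtain ⟨s, hs, hls⟩ := IsEssNumRangeSeq.exists_add_mem_essNumRange_norm_eq hunb hx
    (R := |C| + ‖l‖ + 1) (by positivity)
  linarith [hC _ hls, le_abs_self C, norm_le_add_norm_add' l s]
end
end

section
/- Let T be a densely defined linear operator on a complex Hilbert space H (so D(T) is dense in H) that is unbounded, i.e., there is no constant C ≥ 0 with ‖Tx‖ ≤ C‖x‖ for all x ∈ D(T). Then the essential numerical range W_e(T) is either empty or an unbounded subset of ℂ. -/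
/-!
If `|⟪u, T u⟫| ≤ M` for all unit vectors `u ∈ D`, polarization bounds `|⟪y, T x⟫|` by
`2 M ‖x‖ ‖y‖` on `D × D`, and density of `D` makes `T` bounded. So an unbounded densely defined
`T` has unit vectors `u` with `|⟪u, T u⟫|` as large as we like.

Let `x_k` be weakly null unit vectors with `⟪x_k, T x_k⟫ → l`, and let `r` bound all
`|⟪x_k, T x_k⟫|`. Adding to `x_k` a multiple `±b_k u_k` with `b_k → 0` and `|⟪u_k, T u_k⟫|` huge,
the intermediate value theorem along the segment gives unit vectors `w_k`, still weakly null,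
with `|⟪w_k, T w_k⟫| = r`. A limit point of `⟪w_k, T w_k⟫` lies in `W_e(T)` on the circle of
radius `r`; hence `W_e(T)` meets every circle of large radius.
-/

open Filter Topology
open scoped InnerProductSpace

noncomputable section

variable {H : Type*} [NormedAddCommGroup H] [InnerProductSpace ℂ H] [CompleteSpace H]

section

variable {E : Type*} [NormedAddCommGroup E] [InnerProductSpace ℂ E] {D : Submodule ℂ E}
  (T : D →ₗ[ℂ] E)

lemma inner_map_smul_self (c : ℂ) (x : D) :
    ⟪((c • x : D) : E), T (c • x)⟫_ℂ = ((‖c‖ ^ 2 : ℝ) : ℂ) * ⟪(x : E), T x⟫_ℂ := by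
  simp only [map_smul, Submodule.coe_smul, inner_smul_left, inner_smul_right, ← mul_assoc,
    Complex.mul_conj', Complex.ofReal_pow]

lemma norm_inner_map_smul_self (c : ℂ) (x : D) :
    ‖⟪((c • x : D) : E), T (c • x)⟫_ℂ‖ = ‖c‖ ^ 2 * ‖⟪(x : E), T x⟫_ℂ‖ := by
  rw [inner_map_smul_self, norm_mul, Complex.norm_real, Real.norm_of_nonneg (by positivity)]

lemma inner_map_add_add_inner_map_sub (x v : D) :
    ⟪((x + v : D) : E), T (x + v)⟫_ℂ + ⟪((x - v : D) : E), T (x - v)⟫_ℂ =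
      2 * (⟪(x : E), T x⟫_ℂ + ⟪(v : E), T v⟫_ℂ) := by
  simp only [map_add, map_sub, Submodule.coe_add, Submodule.coe_sub, inner_add_left,
    inner_add_right, inner_sub_left, inner_sub_right]
  ring

lemma inner_apply_polarization (x y : D) :
    4 * ⟪(y : E), T x⟫_ℂ =
      ⟪((x + y : D) : E), T (x + y)⟫_ℂ - ⟪((x - y : D) : E), T (x - y)⟫_ℂ
      + Complex.I * ⟪((x + Complex.I • y : D) : E), T (x + Complex.I • y)⟫_ℂ
      - Complex.I * ⟪((x - Complex.I • y : D) : E), T (x - Complex.I • y)⟫_ℂ := by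
  simp only [map_add, map_sub, map_smul, Submodule.coe_add, Submodule.coe_sub,
    Submodule.coe_smul, inner_add_left, inner_add_right, inner_sub_left, inner_sub_right,
    inner_smul_left, inner_smul_right, Complex.conj_I]
  linear_combination (2 * ⟪(y : E), T x⟫_ℂ - 2 * ⟪(x : E), T y⟫_ℂ) * Complex.I_sq

lemma norm_inner_map_add_le_max (x v : D) :
    ‖⟪(x : E), T x⟫_ℂ + ⟪(v : E), T v⟫_ℂ‖ ≤
      max ‖⟪((x + v : D) : E), T (x + v)⟫_ℂ‖ ‖⟪((x - v : D) : E), T (x - v)⟫_ℂ‖ := by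
  have h := norm_add_le ⟪((x + v : D) : E), T (x + v)⟫_ℂ ⟪((x - v : D) : E), T (x - v)⟫_ℂ
  rw [inner_map_add_add_inner_map_sub, norm_mul, Complex.norm_two] at h
  set p := ‖⟪((x + v : D) : E), T (x + v)⟫_ℂ‖
  set q := ‖⟪((x - v : D) : E), T (x - v)⟫_ℂ‖
  linarith [le_max_left p q, le_max_right p q]

lemma norm_inner_map_le_of_forall_norm_eq_one {M : ℝ}
    (hM : ∀ u : D, ‖(u : E)‖ = 1 → ‖⟪(u : E), T u⟫_ℂ‖ ≤ M) (x : D) :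
    ‖⟪(x : E), T x⟫_ℂ‖ ≤ M * ‖(x : E)‖ ^ 2 := by
  rcases eq_or_ne (x : E) 0 with hx | hx
  · simp [hx]
  have h := hM ((‖(x : E)‖⁻¹ : ℂ) • x) (by rw [Submodule.coe_smul]; exact norm_smul_inv_norm hx)
  rw [norm_inner_map_smul_self, norm_inv, Complex.norm_real, norm_norm, inv_pow,
    inv_mul_le_iff₀ (by positivity)] at h
  linarith

lemma norm_inner_apply_le_of_norm_inner_map_le {M : ℝ}
    (hM : ∀ x : D, ‖⟪(x : E), T x⟫_ℂ‖ ≤ M * ‖(x : E)‖ ^ 2) (x y : D) :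
    ‖⟪(y : E), T x⟫_ℂ‖ ≤ M * (‖(x : E)‖ ^ 2 + ‖(y : E)‖ ^ 2) := by
  have hpol := congrArg norm (inner_apply_polarization T x y)
  set a := ⟪((x + y : D) : E), T (x + y)⟫_ℂ
  set b := ⟪((x - y : D) : E), T (x - y)⟫_ℂ
  set c := ⟪((x + Complex.I • y : D) : E), T (x + Complex.I • y)⟫_ℂ
  set d := ⟪((x - Complex.I • y : D) : E), T (x - Complex.I • y)⟫_ℂ
  have htri : ‖a - b + Complex.I * c - Complex.I * d‖ ≤ ‖a‖ + ‖b‖ + ‖c‖ + ‖d‖ :=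
    calc _ ≤ ‖a‖ + ‖b‖ + ‖Complex.I * c‖ + ‖Complex.I * d‖ :=
          (norm_sub_le _ _).trans <| by
            gcongr; exact (norm_add_le _ _).trans (by gcongr; exact norm_sub_le _ _)
      _ = _ := by rw [norm_mul, norm_mul, Complex.norm_I, one_mul, one_mul]
  have hI : ‖Complex.I • (y : E)‖ = ‖(y : E)‖ := by rw [norm_smul, Complex.norm_I, one_mul]
  have hpar₁ := parallelogram_law_with_norm ℂ (x : E) (y : E)
  have hpar₂ := parallelogram_law_with_norm ℂ (x : E) (Complex.I • (y : E))
  rw [hI] at hpar₂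
  have h₁ := hM (x + y)
  have h₂ := hM (x - y)
  have h₃ := hM (x + Complex.I • y)
  have h₄ := hM (x - Complex.I • y)
  simp only [Submodule.coe_add, Submodule.coe_sub, Submodule.coe_smul, a, b, c, d]
    at h₁ h₂ h₃ h₄ hpol htri
  rw [norm_mul, show ‖(4 : ℂ)‖ = 4 by norm_num] at hpol
  linarith [congrArg (M * ·) hpar₁, congrArg (M * ·) hpar₂]

lemma norm_inner_apply_le_two_mul {M : ℝ}
    (hM : ∀ x : D, ‖⟪(x : E), T x⟫_ℂ‖ ≤ M * ‖(x : E)‖ ^ 2) (x y : D) :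
    ‖⟪(y : E), T x⟫_ℂ‖ ≤ 2 * M * ‖(x : E)‖ * ‖(y : E)‖ := by
  rcases eq_or_ne (y : E) 0 with hy | hy
  · simp [hy]
  rcases eq_or_ne (x : E) 0 with hx | hx
  · simp [Submodule.coe_eq_zero.mp hx]
  have hx' : 0 < ‖(x : E)‖ := norm_pos_iff.mpr hx
  have hy' : 0 < ‖(y : E)‖ := norm_pos_iff.mpr hy
  -- rescale `y` to the length of `x`, where the bound `M (‖x‖² + ‖y‖²)` is sharpest
  set s : ℝ := ‖(x : E)‖ / ‖(y : E)‖
  have hs : 0 ≤ s := by positivity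
  have hsy : s * ‖(y : E)‖ = ‖(x : E)‖ := div_mul_cancel₀ _ hy'.ne'
  have h := norm_inner_apply_le_of_norm_inner_map_le T hM x ((s : ℂ) • y)
  rw [Submodule.coe_smul, inner_smul_left, norm_mul, norm_smul, Complex.norm_conj,
    Complex.norm_real, Real.norm_of_nonneg hs, hsy] at h
  have h' : ‖(x : E)‖ * ‖⟪(y : E), T x⟫_ℂ‖ ≤ ‖(x : E)‖ * (2 * M * ‖(x : E)‖ * ‖(y : E)‖) :=
    calc ‖(x : E)‖ * ‖⟪(y : E), T x⟫_ℂ‖ = s * ‖⟪(y : E), T x⟫_ℂ‖ * ‖(y : E)‖ := by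
          rw [← hsy]; ring
      _ ≤ M * (‖(x : E)‖ ^ 2 + ‖(x : E)‖ ^ 2) * ‖(y : E)‖ := by gcongr
      _ = ‖(x : E)‖ * (2 * M * ‖(x : E)‖ * ‖(y : E)‖) := by ring
  exact le_of_mul_le_mul_left h' hx'

lemma norm_apply_le_of_norm_inner_apply_le (hdense : Dense (D : Set E)) {C : ℝ} (hC : 0 ≤ C)
    (h : ∀ x y : D, ‖⟪(y : E), T x⟫_ℂ‖ ≤ C * ‖(x : E)‖ * ‖(y : E)‖) (x : D) :
    ‖T x‖ ≤ C * ‖(x : E)‖ := by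
  have hall : ∀ y : E, ‖⟪y, T x⟫_ℂ‖ ≤ C * ‖(x : E)‖ * ‖y‖ := by
    have hclosed : IsClosed {y : E | ‖⟪y, T x⟫_ℂ‖ ≤ C * ‖(x : E)‖ * ‖y‖} :=
      isClosed_le (by fun_prop) (by fun_prop)
    exact fun y => hclosed.closure_subset_iff.mpr (fun y hy => h x ⟨y, hy⟩) (hdense y)
  have hTx := hall (T x)
  rw [inner_self_eq_norm_sq_to_K, norm_pow, RCLike.norm_ofReal, abs_norm, sq] at hTx
  rcases (norm_nonneg (T x)).eq_or_lt with h0 | h0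
  · rw [← h0]; positivity
  · exact le_of_mul_le_mul_right hTx h0

lemma exists_norm_inner_map_gt (hdense : Dense (D : Set E))
    (hunb : ¬ ∃ C : ℝ, 0 ≤ C ∧ ∀ x : D, ‖T x‖ ≤ C * ‖(x : E)‖) (M : ℝ) :
    ∃ u : D, ‖(u : E)‖ = 1 ∧ M < ‖⟪(u : E), T u⟫_ℂ‖ := by
  by_contra! h
  have hq := norm_inner_map_le_of_forall_norm_eq_one T (M := max M 0)
    fun u hu => (h u hu).trans (le_max_left M 0)
  exact hunb ⟨2 * max M 0, by positivity, norm_apply_le_of_norm_inner_apply_le T hdense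
    (by positivity) (norm_inner_apply_le_two_mul T hq)⟩

lemma exists_norm_inner_map_eq_mul_norm_sq {r : ℝ} (x v : D)
    (h₀ : ‖⟪(x : E), T x⟫_ℂ‖ ≤ r * ‖(x : E)‖ ^ 2)
    (h₁ : r * ‖((x + v : D) : E)‖ ^ 2 ≤ ‖⟪((x + v : D) : E), T (x + v)⟫_ℂ‖) :
    ∃ t ∈ Set.Icc (0 : ℝ) 1, ‖⟪((x + (t : ℂ) • v : D) : E), T (x + (t : ℂ) • v)⟫_ℂ‖ =
      r * ‖((x + (t : ℂ) • v : D) : E)‖ ^ 2 := by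
  let g : ℝ → ℝ := fun t =>
    ‖⟪((x + (t : ℂ) • v : D) : E), T (x + (t : ℂ) • v)⟫_ℂ‖ - r * ‖((x + (t : ℂ) • v : D) : E)‖ ^ 2
  have hg : Continuous g := by
    simp only [g, map_add, map_smul, Submodule.coe_add, Submodule.coe_smul]
    fun_prop
  obtain ⟨t, ht, hgt⟩ := intermediate_value_Icc zero_le_one hg.continuousOn
    (show (0 : ℝ) ∈ Set.Icc (g 0) (g 1) by
      simp only [g, Complex.ofReal_zero, Complex.ofReal_one, zero_smul, one_smul, add_zero]
      constructor <;> linarith)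
  exact ⟨t, ht, sub_eq_zero.mp hgt⟩

lemma exists_norm_eq_le_norm_inner_map_add {b : ℝ} (x u : D) (hu : ‖(u : E)‖ = 1) (hb : 0 ≤ b) :
    ∃ v : D, ‖(v : E)‖ = b ∧
      b ^ 2 * ‖⟪(u : E), T u⟫_ℂ‖ - ‖⟪(x : E), T x⟫_ℂ‖ ≤ ‖⟪((x + v : D) : E), T (x + v)⟫_ℂ‖ := by
  have hbu : ‖(((b : ℂ) • u : D) : E)‖ = b := by
    rw [Submodule.coe_smul, norm_smul, Complex.norm_real, Real.norm_of_nonneg hb, hu, mul_one]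
  have hlow : b ^ 2 * ‖⟪(u : E), T u⟫_ℂ‖ - ‖⟪(x : E), T x⟫_ℂ‖ ≤
      ‖⟪(x : E), T x⟫_ℂ + ⟪(((b : ℂ) • u : D) : E), T ((b : ℂ) • u)⟫_ℂ‖ := by
    have h := norm_sub_le_norm_add ⟪(((b : ℂ) • u : D) : E), T ((b : ℂ) • u)⟫_ℂ ⟪(x : E), T x⟫_ℂ
    rwa [norm_inner_map_smul_self, Complex.norm_real, Real.norm_of_nonneg hb, add_comm] at h
  -- one of the signs `±b u` keeps the cross terms of the form from cancelling `b² ⟪u, T u⟫`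
  rcases le_max_iff.mp (hlow.trans (norm_inner_map_add_le_max T x _)) with h | h
  · exact ⟨_, hbu, h⟩
  · exact ⟨-((b : ℂ) • u), by rwa [Submodule.coe_neg, norm_neg], by rwa [← sub_eq_add_neg]⟩

lemma exists_norm_inner_map_eq_near {r b : ℝ} (x u : D) (hx : ‖(x : E)‖ = 1)
    (hu : ‖(u : E)‖ = 1) (hxr : ‖⟪(x : E), T x⟫_ℂ‖ ≤ r) (hb₀ : 0 ≤ b) (hb : b ≤ 1 / 2)
    (hur : 4 * r ≤ b ^ 2 * ‖⟪(u : E), T u⟫_ℂ‖) :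
    ∃ w : D, ‖(w : E)‖ = 1 ∧ ‖⟪(w : E), T w⟫_ℂ‖ = r ∧
      ∀ y : E, ‖⟪(w : E), y⟫_ℂ‖ ≤ 2 * (‖⟪(x : E), y⟫_ℂ‖ + b * ‖y‖) := by
  obtain ⟨v, hvb, hv⟩ := exists_norm_eq_le_norm_inner_map_add T x u hu hb₀
  have hr : 0 ≤ r := (norm_nonneg _).trans hxr
  have hxv : ‖((x + v : D) : E)‖ ^ 2 ≤ 3 := by
    have h : ‖((x + v : D) : E)‖ ≤ 1 + b := by rw [← hx, ← hvb]; exact norm_add_le _ _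
    nlinarith [norm_nonneg ((x + v : D) : E)]
  obtain ⟨t, ⟨ht₀, ht₁⟩, htr⟩ := exists_norm_inner_map_eq_mul_norm_sq T (r := r) x v
    (by rwa [hx, one_pow, mul_one]) (by linarith [mul_le_mul_of_nonneg_left hxv hr])
  set z : D := x + (t : ℂ) • v
  have htv : ‖(((t : ℂ) • v : D) : E)‖ = t * b := by
    rw [Submodule.coe_smul, norm_smul, Complex.norm_real, Real.norm_of_nonneg ht₀, hvb]
  have hz : 1 / 2 ≤ ‖(z : E)‖ := by
    have h := norm_sub_le_norm_add (x : E) (((t : ℂ) • v : D) : E)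
    rw [hx, htv, ← Submodule.coe_add] at h
    nlinarith
  have hz₀ : (z : E) ≠ 0 := norm_pos_iff.mp (by linarith)
  refine ⟨(‖(z : E)‖⁻¹ : ℂ) • z, by rw [Submodule.coe_smul]; exact norm_smul_inv_norm hz₀,
    by rw [norm_inner_map_smul_self, norm_inv, Complex.norm_real, norm_norm, htr]; field_simp,
    fun y => ?_⟩
  have hzy : ‖⟪(z : E), y⟫_ℂ‖ ≤ ‖⟪(x : E), y⟫_ℂ‖ + b * ‖y‖ :=
    calc ‖⟪(z : E), y⟫_ℂ‖ ≤ ‖⟪(x : E), y⟫_ℂ‖ + ‖(((t : ℂ) • v : D) : E)‖ * ‖y‖ := by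
          rw [Submodule.coe_add, inner_add_left]
          exact (norm_add_le _ _).trans (by gcongr; exact norm_inner_le_norm _ _)
      _ ≤ ‖⟪(x : E), y⟫_ℂ‖ + b * ‖y‖ := by rw [htv]; gcongr; nlinarith
  have hz_inv : ‖(z : E)‖⁻¹ ≤ 2 := by
    rw [inv_le_comm₀ (by linarith) two_pos]; linarith
  rw [Submodule.coe_smul, inner_smul_left, norm_mul, Complex.norm_conj, norm_inv,
    Complex.norm_real, norm_norm]
  gcongr

lemma exists_mem_essNumRange_norm_eq {r : ℝ} (w : ℕ → D)
    (hw₁ : ∀ k, ‖(w k : E)‖ = 1)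
    (hw₀ : ∀ y : E, Tendsto (fun k => ⟪(w k : E), y⟫_ℂ) atTop (𝓝 0))
    (hwr : ∀ k, ‖⟪(w k : E), T (w k)⟫_ℂ‖ = r) :
    ∃ μ ∈ essNumRange D T, ‖μ‖ = r := by
  obtain ⟨μ, hμ, φ, hφ, hφμ⟩ := (isCompact_sphere (0 : ℂ) r).tendsto_subseq
    (x := fun k => ⟪(w k : E), T (w k)⟫_ℂ) fun k => by simpa using hwr k
  exact ⟨μ, ⟨w ∘ φ, fun k => hw₁ (φ k), fun y => (hw₀ y).comp hφ.tendsto_atTop, hφμ⟩,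
    by simpa using hμ⟩

lemma eventually_exists_mem_essNumRange_norm_eq (hdense : Dense (D : Set E))
    (hunb : ¬ ∃ C : ℝ, 0 ≤ C ∧ ∀ x : D, ‖T x‖ ≤ C * ‖(x : E)‖)
    (hne : (essNumRange D T).Nonempty) :
    ∀ᶠ r in atTop, ∃ μ ∈ essNumRange D T, ‖μ‖ = r := by
  obtain ⟨l, x, hx₁, hx₀, hxl⟩ := hne
  obtain ⟨B, hB⟩ := hxl.norm.bddAbove_range
  filter_upwards [eventually_ge_atTop B] with r hr
  have hw : ∀ k : ℕ, ∃ w : D, ‖(w : E)‖ = 1 ∧ ‖⟪(w : E), T w⟫_ℂ‖ = r ∧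
      ∀ y : E, ‖⟪(w : E), y⟫_ℂ‖ ≤ 2 * (‖⟪(x k : E), y⟫_ℂ‖ + 1 / (k + 2) * ‖y‖) := fun k => by
    obtain ⟨u, hu₁, hu⟩ := exists_norm_inner_map_gt T hdense hunb (4 * r * (k + 2) ^ 2)
    have hk : (0 : ℝ) < k + 2 := by positivity
    refine exists_norm_inner_map_eq_near T (x k) u (hx₁ k) hu₁ ((hB ⟨k, rfl⟩).trans hr)
      (by positivity) ?_ ?_
    · rw [div_le_div_iff₀ hk two_pos]; linarith
    · rw [div_pow, one_pow, div_mul_eq_mul_div, one_mul, le_div_iff₀ (by positivity)]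
      exact hu.le
  choose w hw₁ hwr hwy using hw
  refine exists_mem_essNumRange_norm_eq T w hw₁ (fun y => ?_) hwr
  have hbound : Tendsto (fun k : ℕ => 2 * (‖⟪(x k : E), y⟫_ℂ‖ + 1 / ((k : ℝ) + 2) * ‖y‖))
      atTop (𝓝 0) := by
    have hb : Tendsto (fun k : ℕ => 1 / ((k : ℝ) + 2)) atTop (𝓝 0) := by
      refine (tendsto_one_div_add_atTop_nhds_zero_nat.comp (tendsto_add_atTop_nat 1)).congr
        fun k => ?_
      simp only [Function.comp_apply, Nat.cast_add, Nat.cast_one]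
      ring
    simpa using ((hx₀ y).norm.add (hb.mul_const ‖y‖)).const_mul 2
  exact tendsto_zero_iff_norm_tendsto_zero.mpr
    (squeeze_zero (fun k => norm_nonneg _) (fun k => hwy k y) hbound)

end

/-- if `T` is densely defined and unbounded (there is no `C ≥ 0` with
`‖T x‖ ≤ C ‖x‖` for all `x ∈ D(T)`), then `W_e(T)` is empty or unbounded. -/
theorem essNumRange_empty_or_unbounded (D : Submodule ℂ H) (T : D →ₗ[ℂ] H)
    (hdense : Dense (D : Set H))
    (hunb : ¬ ∃ C : ℝ, 0 ≤ C ∧ ∀ x : D, ‖T x‖ ≤ C * ‖(x : H)‖) :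
    essNumRange D T = ∅ ∨ ¬ Bornology.IsBounded (essNumRange D T) := by
  refine (Set.eq_empty_or_nonempty _).imp_right fun hne hbdd => ?_
  obtain ⟨R, hR⟩ := isBounded_iff_forall_norm_le.mp hbdd
  obtain ⟨r, ⟨μ, hμ, rfl⟩, hRr⟩ :=
    ((eventually_exists_mem_essNumRange_norm_eq T hdense hunb hne).and
      (eventually_gt_atTop R)).exists
  exact (hR μ hμ).not_gt hRr
end
end

section
/- Let 𝔱 be a sectorial sesquilinear form on a complex Hilbert space H, i.e., there exist v ∈ ℂ and 0 ≤ θ < π/2 such that |arg(z − v)| ≤ θ for all z ∈ W(𝔱). Then Re W_e(𝔱) = W_e(Re 𝔱); equivalently, {Re z : z ∈ W_e(𝔱)} equals the set of real numbers a for which there exists a sequence (x_n) in D(𝔱) with ‖x_n‖ = 1, x_n → 0 weakly, and Re(𝔱[x_n]) → a. -/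
/-!
On a sector `|arg (z - v)| ≤ θ < π/2` the modulus is controlled by the real part,
`‖z - v‖ cos θ ≤ Re (z - v)`. Hence along a weakly null sequence with `Re 𝔱[xₙ] → a` the values
`𝔱[xₙ]` stay bounded, a subsequence converges to some `z`, and necessarily `Re z = a`; the
subsequence is still a normalized weakly null sequence, so `z ∈ W_e(𝔱)`.
-/

open Filter Topology
open scoped InnerProductSpace

noncomputable section

variable {H : Type*} [NormedAddCommGroup H] [InnerProductSpace ℂ H] [CompleteSpace H]

open Set Bornology

namespace Complex

theorem norm_mul_cos_le_re_of_abs_arg_le {w : ℂ} {θ : ℝ} (h : |arg w| ≤ θ) (hθ : θ ≤ Real.pi) :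
    ‖w‖ * Real.cos θ ≤ w.re :=
  calc ‖w‖ * Real.cos θ ≤ ‖w‖ * Real.cos (arg w) := by
        gcongr
        rw [← Real.cos_abs (arg w)]
        exact Real.cos_le_cos_of_nonneg_of_le_pi (abs_nonneg _) hθ h
    _ = w.re := norm_mul_cos_arg w

theorem isBounded_of_abs_arg_sub_le_of_bddAbove_re {S : Set ℂ} {v : ℂ} {θ : ℝ} (hθ₀ : 0 ≤ θ)
    (hθ : θ < Real.pi / 2) (hS : ∀ z ∈ S, |arg (z - v)| ≤ θ) (hre : BddAbove (re '' S)) :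
    IsBounded S := by
  obtain ⟨M, hM⟩ := hre
  have hcos : 0 < Real.cos θ := Real.cos_pos_of_mem_Ioo ⟨by linarith [Real.pi_pos], hθ⟩
  refine (Metric.isBounded_closedBall (x := v) (r := (M - v.re) / Real.cos θ)).subset
    fun z hz => ?_
  rw [Metric.mem_closedBall, dist_eq, le_div_iff₀ hcos]
  calc ‖z - v‖ * Real.cos θ ≤ (z - v).re :=
        norm_mul_cos_le_re_of_abs_arg_le (hS z hz) (by linarith [Real.pi_pos])
    _ ≤ M - v.re := by rw [sub_re]; linarith [hM (mem_image_of_mem re hz)]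

theorem exists_re_eq_and_subseq_tendsto {u : ℕ → ℂ} {a : ℝ} (hu : IsBounded (range u))
    (ha : Tendsto (fun n => (u n).re) atTop (𝓝 a)) :
    ∃ z : ℂ, z.re = a ∧ ∃ φ : ℕ → ℕ, StrictMono φ ∧ Tendsto (u ∘ φ) atTop (𝓝 z) := by
  obtain ⟨z, -, φ, hφ, hz⟩ := tendsto_subseq_of_bounded hu mem_range_self
  exact ⟨z, tendsto_nhds_unique ((continuous_re.tendsto z).comp hz) (ha.comp hφ.tendsto_atTop),
    φ, hφ, hz⟩

end Complex

/-- if `𝔱` is sectorial, i.e. there are `v ∈ ℂ` and `0 ≤ θ < π/2` with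
`|arg(z - v)| ≤ θ` for all `z ∈ W(𝔱)`, then `Re W_e(𝔱) = W_e(Re 𝔱)`: the image of `W_e(𝔱)`
under `Re` equals the set of real `a` attained as limits `Re 𝔱[xₙ] → a` along normalized
weak null sequences in `D(𝔱)`. -/
theorem re_essNumRangeForm_of_sectorial (D : Submodule ℂ H) (𝔱 : D →ₗ[ℂ] D →ₗ⋆[ℂ] ℂ)
    (hsect : ∃ (v : ℂ) (θ : ℝ), 0 ≤ θ ∧ θ < Real.pi / 2 ∧
      ∀ z ∈ numRangeForm D 𝔱, |Complex.arg (z - v)| ≤ θ) :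
    Complex.re '' essNumRangeForm D 𝔱 =
      {a : ℝ | ∃ x : ℕ → D, (∀ n, ‖(x n : H)‖ = 1) ∧
        (∀ y : H, Tendsto (fun n => ⟪(x n : H), y⟫_ℂ) atTop (𝓝 0)) ∧
        Tendsto (fun n => (𝔱 (x n) (x n)).re) atTop (𝓝 a)} := by
  obtain ⟨v, θ, hθ₀, hθ, hsec⟩ := hsect
  ext a
  constructor
  · rintro ⟨z, ⟨x, hx1, hxw, hxz⟩, rfl⟩
    exact ⟨x, hx1, hxw, (Complex.continuous_re.tendsto z).comp hxz⟩
  · rintro ⟨x, hx1, hxw, hxa⟩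
    have hbdd : IsBounded (range fun n => 𝔱 (x n) (x n)) := by
      refine Complex.isBounded_of_abs_arg_sub_le_of_bddAbove_re hθ₀ hθ
        (forall_mem_range.2 fun n => hsec _ ⟨x n, hx1 n, rfl⟩) ?_
      rw [← range_comp]
      exact hxa.bddAbove_range
    obtain ⟨z, rfl, φ, hφ, hz⟩ := Complex.exists_re_eq_and_subseq_tendsto hbdd hxa
    exact ⟨z, ⟨x ∘ φ, fun n => hx1 _, fun y => (hxw y).comp hφ.tendsto_atTop, hz⟩, rfl⟩
end
end

section
/- Let A₀ and A₁ be bounded self-adjoint operators on an infinite-dimensional complex Hilbert space H such that min W_e(A₀) = 0. Then the set {s ∈ ℝ : is ∈ W_e(A₀ + iA₁)} is nonempty and has a minimum ω, and (min W_e(A₀ + tA₁))/t → ω as t → 0⁺. -/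
open Filter Topology
open scoped InnerProductSpace

noncomputable section

variable {H : Type*} [NormedAddCommGroup H] [InnerProductSpace ℂ H] [CompleteSpace H]

/-- The essential numerical range of a bounded operator `S` on `H`. -/
def essNumRangeB (S : H →L[ℂ] H) : Set ℂ :=
  {l : ℂ | ∃ x : ℕ → H, (∀ n, ‖x n‖ = 1) ∧
    (∀ y : H, Tendsto (fun n => ⟪x n, y⟫_ℂ) atTop (𝓝 0)) ∧
    Tendsto (fun n => ⟪x n, S (x n)⟫_ℂ) atTop (𝓝 l)}

/-!
For self-adjoint `A₀, A₁` the values `⟪x, (A₀ + c • A₁) x⟫` are `p.1 + c * p.2` with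
`p = (⟪x, A₀ x⟫, ⟪x, A₁ x⟫) ∈ ℝ²`, so `W_e(A₀ + c • A₁)` is the image of one set `K ⊆ ℝ²`, the
joint essential numerical range, under `p ↦ p.1 + c * p.2`. Describing `K` as the intersection,
over finite sets `F`, of the closures of the joint values on unit vectors orthogonal to `F` makes
it compact, and nonempty when `H` is infinite-dimensional.

The hypothesis says `K` lies in `{p.1 ≥ 0}` and meets the axis `p.1 = 0`; `ω` is the lowest point
of `K` on that axis. Then `min_K (p.1 + t p.2) ≤ t ω`, while by compactness the points of `K`
below height `ω - ε` satisfy `p.1 ≥ δ > 0`, so for small `t > 0` the minimum is `≥ t (ω - ε)`.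
-/

open Set Metric

section InnerProductSpace

variable {𝕜 E : Type*} [RCLike 𝕜] [NormedAddCommGroup E] [InnerProductSpace 𝕜 E]

theorem norm_inner_map_self_sub_le (A : E →L[𝕜] E) {a b : E} (ha : ‖a‖ ≤ 1) (hb : ‖b‖ ≤ 1) :
    ‖⟪b, A b⟫_𝕜 - ⟪a, A a⟫_𝕜‖ ≤ 2 * ‖A‖ * ‖b - a‖ :=
  calc ‖⟪b, A b⟫_𝕜 - ⟪a, A a⟫_𝕜‖ = ‖⟪b - a, A b⟫_𝕜 + ⟪a, A (b - a)⟫_𝕜‖ := by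
        rw [inner_sub_left, map_sub, inner_sub_right, sub_add_sub_cancel]
    _ ≤ ‖b - a‖ * ‖A b‖ + ‖a‖ * ‖A (b - a)‖ :=
        (norm_add_le _ _).trans (add_le_add (norm_inner_le_norm _ _) (norm_inner_le_norm _ _))
    _ ≤ ‖b - a‖ * (‖A‖ * 1) + 1 * (‖A‖ * ‖b - a‖) := by
        gcongr
        exacts [A.le_opNorm_of_le hb, A.le_opNorm _]
    _ = 2 * ‖A‖ * ‖b - a‖ := by ring

theorem Orthonormal.tendsto_inner_atTop_zero {x : ℕ → E} (hx : Orthonormal 𝕜 x) (y : E) :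
    Tendsto (fun n => ⟪x n, y⟫_𝕜) atTop (𝓝 0) := by
  have h := (hx.inner_products_summable (x := y)).tendsto_atTop_zero.sqrt
  simp only [Real.sqrt_zero, Real.sqrt_sq (norm_nonneg _)] at h
  exact tendsto_zero_iff_norm_tendsto_zero.mpr h

theorem Submodule.tendsto_starProjection_of_tendsto_inner (V : Submodule 𝕜 E)
    [FiniteDimensional 𝕜 V] {x : ℕ → E} (hx : ∀ y, Tendsto (fun n => ⟪x n, y⟫_𝕜) atTop (𝓝 0)) :
    Tendsto (fun n => V.starProjection (x n)) atTop (𝓝 0) := by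
  let b := stdOrthonormalBasis 𝕜 V
  have hcoeff (i) : Tendsto (fun n => ⟪(b i : E), x n⟫_𝕜) atTop (𝓝 0) := by
    simpa only [Function.comp_def, star_zero, RCLike.star_def, inner_conj_symm] using
      (continuous_star.tendsto 0).comp (hx (b i))
  have hsum := tendsto_finsetSum Finset.univ fun i _ => (hcoeff i).smul_const (b i : E)
  simp only [zero_smul, Finset.sum_const_zero] at hsum
  refine hsum.congr fun n => ?_
  simp [starProjection, b.orthogonalProjectionOnto_apply_eq_sum]

theorem exists_norm_eq_one_mem_orthogonal (hinf : ¬ FiniteDimensional 𝕜 E) (V : Submodule 𝕜 E)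
    [FiniteDimensional 𝕜 V] : ∃ x : E, ‖x‖ = 1 ∧ x ∈ Vᗮ := by
  have hV : Vᗮ ≠ ⊥ := fun h => hinf <| by
    rw [Submodule.orthogonal_eq_bot_iff] at h
    exact (LinearEquiv.ofTop V h).finiteDimensional
  obtain ⟨v, hv, hv0⟩ := Submodule.exists_mem_ne_zero_of_ne_bot hV
  exact ⟨(‖v‖⁻¹ : 𝕜) • v, norm_smul_inv_norm hv0, Vᗮ.smul_mem _ hv⟩

end InnerProductSpace

theorem NormedSpace.norm_normalize_sub_le {V : Type*} [NormedAddCommGroup V] [NormedSpace ℝ V]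
    {x : V} (hx : ‖x‖ = 1) (u : V) : ‖normalize u - x‖ ≤ 2 * ‖u - x‖ := by
  rcases eq_or_ne u 0 with rfl | hu
  · simp [hx]
  have hu' : 0 < ‖u‖ := norm_pos_iff.mpr hu
  have hnorm : ‖normalize u - u‖ = |1 - ‖u‖| :=
    calc ‖normalize u - u‖ = ‖(‖u‖⁻¹ - 1) • u‖ := by rw [sub_smul, one_smul, normalize]
      _ = |(‖u‖⁻¹ - 1) * ‖u‖| := by rw [norm_smul, Real.norm_eq_abs, abs_mul, abs_norm]
      _ = |1 - ‖u‖| := by rw [sub_mul, inv_mul_cancel₀ hu'.ne', one_mul]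
  calc ‖normalize u - x‖ ≤ ‖normalize u - u‖ + ‖u - x‖ := norm_sub_le_norm_sub_add_norm_sub _ _ _
    _ ≤ ‖u - x‖ + ‖u - x‖ := by
        rw [hnorm, ← hx, norm_sub_rev u]
        gcongr
        exact abs_norm_sub_norm_le x u
    _ = 2 * ‖u - x‖ := by ring

section JointEssNumRange

variable {E : Type*} [NormedAddCommGroup E] [InnerProductSpace ℂ E] (A₀ A₁ : E →L[ℂ] E)

def jointForm (x : E) : ℝ × ℝ := ((⟪x, A₀ x⟫_ℂ).re, (⟪x, A₁ x⟫_ℂ).re)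

def jointNumRangeOrth (F : Finset E) : Set (ℝ × ℝ) :=
  closure (jointForm A₀ A₁ '' (sphere 0 1 ∩ (Submodule.span ℂ (F : Set E))ᗮ))

def jointEssNumRange : Set (ℝ × ℝ) := ⋂ F : Finset E, jointNumRangeOrth A₀ A₁ F

variable {A₀ A₁}

theorem norm_jointForm_le {x : E} (hx : ‖x‖ ≤ 1) : ‖jointForm A₀ A₁ x‖ ≤ max ‖A₀‖ ‖A₁‖ := by
  have key (A : E →L[ℂ] E) : ‖(⟪x, A x⟫_ℂ).re‖ ≤ ‖A‖ :=
    calc ‖(⟪x, A x⟫_ℂ).re‖ ≤ ‖⟪x, A x⟫_ℂ‖ := Complex.abs_re_le_norm _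
      _ ≤ ‖x‖ * ‖A x‖ := norm_inner_le_norm _ _
      _ ≤ 1 * (‖A‖ * 1) := by gcongr; exact A.le_opNorm_of_le hx
      _ = ‖A‖ := by ring
  exact max_le_max (key A₀) (key A₁)

theorem dist_jointForm_le {a b : E} (ha : ‖a‖ ≤ 1) (hb : ‖b‖ ≤ 1) :
    dist (jointForm A₀ A₁ b) (jointForm A₀ A₁ a) ≤ 2 * max ‖A₀‖ ‖A₁‖ * ‖b - a‖ := by
  have key (A : E →L[ℂ] E) : dist (⟪b, A b⟫_ℂ).re (⟪a, A a⟫_ℂ).re ≤ 2 * ‖A‖ * ‖b - a‖ := by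
    rw [Real.dist_eq, ← Complex.sub_re]
    exact (Complex.abs_re_le_norm _).trans (norm_inner_map_self_sub_le A ha hb)
  rw [Prod.dist_eq]
  refine max_le ((key A₀).trans ?_) ((key A₁).trans ?_) <;> gcongr
  exacts [le_max_left _ _, le_max_right _ _]

theorem jointNumRangeOrth_subset_closedBall (F : Finset E) :
    jointNumRangeOrth A₀ A₁ F ⊆ closedBall 0 (max ‖A₀‖ ‖A₁‖) :=
  closure_minimal (image_subset_iff.2 fun _ hx =>
    mem_closedBall_zero_iff.2 (norm_jointForm_le (mem_sphere_zero_iff_norm.1 hx.1).le))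
    isClosed_closedBall

theorem isCompact_jointNumRangeOrth (F : Finset E) : IsCompact (jointNumRangeOrth A₀ A₁ F) :=
  (isCompact_closedBall _ _).of_isClosed_subset isClosed_closure
    (jointNumRangeOrth_subset_closedBall F)

theorem isCompact_jointEssNumRange : IsCompact (jointEssNumRange A₀ A₁) :=
  (isCompact_jointNumRangeOrth ∅).of_isClosed_subset
    (isClosed_iInter fun _ => isClosed_closure) (iInter_subset _ ∅)

theorem jointNumRangeOrth_anti {F G : Finset E} (h : F ⊆ G) :
    jointNumRangeOrth A₀ A₁ G ⊆ jointNumRangeOrth A₀ A₁ F :=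
  closure_mono <| image_mono <| inter_subset_inter_right _ <|
    Submodule.orthogonal_le (Submodule.span_mono (Finset.coe_subset.2 h))

theorem jointEssNumRange_nonempty (hinf : ¬ FiniteDimensional ℂ E) :
    (jointEssNumRange A₀ A₁).Nonempty := by
  classical
  refine IsCompact.nonempty_iInter_of_directed_nonempty_isCompact_isClosed _
    (fun F G => ⟨F ∪ G, ?_, ?_⟩) (fun F => ?_) isCompact_jointNumRangeOrth
    (fun _ => isClosed_closure)
  · exact jointNumRangeOrth_anti Finset.subset_union_left
  · exact jointNumRangeOrth_anti Finset.subset_union_right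
  · obtain ⟨x, hx, hxF⟩ := exists_norm_eq_one_mem_orthogonal hinf (Submodule.span ℂ (F : Set E))
    exact ⟨_, subset_closure ⟨x, ⟨mem_sphere_zero_iff_norm.2 hx, hxF⟩, rfl⟩⟩

theorem mem_jointEssNumRange_of_tendsto {x : ℕ → E} (hx : ∀ n, ‖x n‖ = 1)
    (hxw : ∀ y, Tendsto (fun n => ⟪x n, y⟫_ℂ) atTop (𝓝 0)) {p : ℝ × ℝ}
    (hp : Tendsto (fun n => jointForm A₀ A₁ (x n)) atTop (𝓝 p)) :
    p ∈ jointEssNumRange A₀ A₁ := by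
  refine mem_iInter.2 fun F => ?_
  set V := Submodule.span ℂ (F : Set E)
  -- Projecting `x n` onto `Vᗮ` and renormalizing moves it by at most `2 ‖V.starProjection (x n)‖`.
  let z n := NormedSpace.normalize (x n - V.starProjection (x n))
  have hP := V.tendsto_starProjection_of_tendsto_inner hxw
  have hzx : Tendsto (fun n => ‖x n - z n‖) atTop (𝓝 0) := by
    refine squeeze_zero (fun _ => norm_nonneg _) (fun n => ?_)
      (by simpa using hP.norm.const_mul 2)
    simpa [norm_sub_rev (x n)] using
      NormedSpace.norm_normalize_sub_le (hx n) (x n - V.starProjection (x n))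
  have hz : ∀ᶠ n in atTop, z n ∈ sphere 0 1 ∩ Vᗮ := by
    filter_upwards [hP.norm.eventually (gt_mem_nhds (by norm_num : ‖(0 : E)‖ < 1))] with n hn
    refine ⟨mem_sphere_zero_iff_norm.2 (NormedSpace.norm_normalize fun h => ?_),
      Vᗮ.smul_of_tower_mem _ (V.sub_starProjection_mem_orthogonal _)⟩
    rw [sub_eq_zero] at h
    rw [← h, hx n] at hn
    exact lt_irrefl _ hn
  refine mem_closure_of_tendsto (hp.congr_dist ?_) (hz.mono fun n hn => mem_image_of_mem _ hn)
  refine squeeze_zero' (.of_forall fun _ => dist_nonneg) (hz.mono fun n hn => ?_)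
    (by simpa using hzx.const_mul (2 * max ‖A₀‖ ‖A₁‖))
  exact dist_jointForm_le (mem_sphere_zero_iff_norm.1 hn.1).le (hx n).le

theorem exists_orthonormal_tendsto_of_mem_jointEssNumRange {p : ℝ × ℝ}
    (hp : p ∈ jointEssNumRange A₀ A₁) :
    ∃ x : ℕ → E, Orthonormal ℂ x ∧ Tendsto (fun n => jointForm A₀ A₁ (x n)) atTop (𝓝 p) := by
  classical
  -- The tag `c.1` increases strictly along the sequence, so the `k`-th error is `< 1 / (k + 1)`.
  have hstep (s : Finset (ℕ × E)) : ∃ c : ℕ × E,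
      (‖c.2‖ = 1 ∧ dist (jointForm A₀ A₁ c.2) p < 1 / (c.1 + 1)) ∧
        ∀ a ∈ s, a.1 < c.1 ∧ ⟪a.2, c.2⟫_ℂ = 0 := by
    obtain ⟨_, ⟨w, hw, rfl⟩, hwp⟩ := Metric.mem_closure_iff.1
      (mem_iInter.1 hp (s.image Prod.snd)) (1 / (s.sup Prod.fst + 1 + 1)) (by positivity)
    refine ⟨(s.sup Prod.fst + 1, w), ⟨mem_sphere_zero_iff_norm.1 hw.1, ?_⟩, fun a ha => ⟨?_, ?_⟩⟩
    · rw [dist_comm]; exact_mod_cast hwp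
    · exact Nat.lt_succ_of_le (Finset.le_sup ha)
    · exact Submodule.inner_right_of_mem_orthogonal
        (Submodule.subset_span (Finset.mem_image_of_mem _ ha)) hw.2
  obtain ⟨f, hf, hfr⟩ := exists_seq_of_forall_finset_exists _ _ fun s _ => hstep s
  have hmono : StrictMono fun k => (f k).1 := fun i j h => (hfr i j h).1
  refine ⟨fun k => (f k).2, ⟨fun k => (hf k).1, fun i j hij => ?_⟩, ?_⟩
  · rcases hij.lt_or_gt with h | h
    exacts [(hfr i j h).2, inner_eq_zero_symm.1 (hfr j i h).2]
  · refine tendsto_iff_dist_tendsto_zero.2 (squeeze_zero (fun _ => dist_nonneg)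
      (fun k => (hf k).2.le.trans ?_) tendsto_one_div_add_atTop_nhds_zero_nat)
    gcongr
    exact_mod_cast hmono.id_le k

end JointEssNumRange

section EssNumRange

variable {A₀ A₁ : H →L[ℂ] H}

theorem inner_add_smul_apply_self (hsa₀ : IsSelfAdjoint A₀) (hsa₁ : IsSelfAdjoint A₁) (c : ℂ)
    (x : H) :
    ⟪x, (A₀ + c • A₁) x⟫_ℂ = (jointForm A₀ A₁ x).1 + c * (jointForm A₀ A₁ x).2 := by
  have hre {A : H →L[ℂ] H} (hA : IsSelfAdjoint A) : ((⟪x, A x⟫_ℂ).re : ℂ) = ⟪x, A x⟫_ℂ :=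
    hA.isSymmetric.coe_re_inner_self_apply x
  rw [jointForm, hre hsa₀, hre hsa₁, add_apply, smul_apply, inner_add_right, inner_smul_right]

theorem tendsto_inner_add_smul_apply_self (hsa₀ : IsSelfAdjoint A₀) (hsa₁ : IsSelfAdjoint A₁)
    (c : ℂ) {x : ℕ → H} {p : ℝ × ℝ} (hp : Tendsto (fun n => jointForm A₀ A₁ (x n)) atTop (𝓝 p)) :
    Tendsto (fun n => ⟪x n, (A₀ + c • A₁) (x n)⟫_ℂ) atTop (𝓝 (p.1 + c * p.2)) := by
  simp only [inner_add_smul_apply_self hsa₀ hsa₁]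
  exact ((by fun_prop : Continuous fun q : ℝ × ℝ => (q.1 : ℂ) + c * q.2).tendsto p).comp hp

theorem essNumRangeB_add_smul (hsa₀ : IsSelfAdjoint A₀) (hsa₁ : IsSelfAdjoint A₁) (c : ℂ) :
    essNumRangeB (A₀ + c • A₁) =
      (fun p : ℝ × ℝ => (p.1 : ℂ) + c * p.2) '' jointEssNumRange A₀ A₁ := by
  ext l
  constructor
  · rintro ⟨x, hx, hxw, hl⟩
    obtain ⟨p, -, φ, hφ, hpφ⟩ := tendsto_subseq_of_bounded (isBounded_closedBall (x := 0))
      fun n => mem_closedBall_zero_iff.2 (norm_jointForm_le (A₀ := A₀) (A₁ := A₁) (hx n).le)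
    refine ⟨p, mem_jointEssNumRange_of_tendsto (fun n => hx (φ n))
      (fun y => (hxw y).comp hφ.tendsto_atTop) hpφ, ?_⟩
    exact tendsto_nhds_unique (tendsto_inner_add_smul_apply_self hsa₀ hsa₁ c hpφ)
      (hl.comp hφ.tendsto_atTop)
  · rintro ⟨p, hp, rfl⟩
    obtain ⟨x, hx, hpx⟩ := exists_orthonormal_tendsto_of_mem_jointEssNumRange hp
    exact ⟨x, hx.1, hx.tendsto_inner_atTop_zero, tendsto_inner_add_smul_apply_self hsa₀ hsa₁ c hpx⟩

end EssNumRange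

section Planar

variable {K : Set (ℝ × ℝ)}

theorem eventually_forall_mul_le_fst_add_mul_snd (hK : IsCompact K) (hfst : ∀ p ∈ K, 0 ≤ p.1)
    {ω : ℝ} (hω : ω ∈ lowerBounds {b | ((0 : ℝ), b) ∈ K}) {a : ℝ} (ha : a < ω) :
    ∀ᶠ t in 𝓝[>] 0, ∀ p ∈ K, t * a ≤ p.1 + t * p.2 := by
  have hpos : ∀ p ∈ K ∩ {p | p.2 ≤ a}, 0 < p.1 := fun p ⟨hp, hpa⟩ =>
    (hfst p hp).lt_of_ne fun h => ha.not_ge <| (hω (by rwa [h])).trans hpa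
  obtain ⟨δ, hδ, hδC⟩ := (hK.inter_right (isClosed_le continuous_snd continuous_const))
    |>.exists_forall_le' continuous_fst.continuousOn hpos
  obtain ⟨m, hm⟩ := (hK.image continuous_snd).bddBelow
  have hsmall : ∀ᶠ t in 𝓝 (0 : ℝ), t * (a - m) < δ :=
    ((continuous_id.mul continuous_const).tendsto' 0 0 (zero_mul _)).eventually (gt_mem_nhds hδ)
  filter_upwards [nhdsWithin_le_nhds hsmall, self_mem_nhdsWithin] with t ht (ht0 : 0 < t) p hp
  rcases le_or_gt p.2 a with hpa | hpa
  · nlinarith [hδC p ⟨hp, hpa⟩, hm (mem_image_of_mem _ hp)]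
  · nlinarith [hfst p hp]

theorem tendsto_sInf_image_add_mul_div (hK : IsCompact K) (hfst : ∀ p ∈ K, 0 ≤ p.1) {ω : ℝ}
    (hω : IsLeast {b | ((0 : ℝ), b) ∈ K} ω) :
    Tendsto (fun t => sInf ((fun p : ℝ × ℝ => p.1 + t * p.2) '' K) / t) (𝓝[>] 0) (𝓝 ω) := by
  have hle (t : ℝ) : sInf ((fun p : ℝ × ℝ => p.1 + t * p.2) '' K) ≤ t * ω := by
    have hcont : Continuous fun p : ℝ × ℝ => p.1 + t * p.2 := by fun_prop
    simpa using csInf_le (hK.image hcont).bddBelow (mem_image_of_mem _ hω.1)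
  refine tendsto_order.2 ⟨fun a ha => ?_, fun b hb => ?_⟩
  · obtain ⟨a', ha', ha'ω⟩ := exists_between ha
    filter_upwards [eventually_forall_mul_le_fst_add_mul_snd hK hfst hω.2 ha'ω, self_mem_nhdsWithin]
      with t ht (ht0 : 0 < t)
    rw [lt_div_iff₀ ht0]
    have := le_csInf (Set.Nonempty.image (s := K) _ ⟨_, hω.1⟩) (forall_mem_image.2 ht)
    nlinarith
  · filter_upwards [self_mem_nhdsWithin] with t (ht0 : 0 < t)
    rw [div_lt_iff₀ ht0]
    nlinarith [hle t]

theorem exists_isLeast_and_tendsto_sInf_image_add_mul_div (hK : IsCompact K) (hne : K.Nonempty)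
    (h0 : sInf (Prod.fst '' K) = 0) :
    ∃ ω, IsLeast {b | ((0 : ℝ), b) ∈ K} ω ∧
      Tendsto (fun t => sInf ((fun p : ℝ × ℝ => p.1 + t * p.2) '' K) / t) (𝓝[>] 0) (𝓝 ω) := by
  have hfst (p) (hp : p ∈ K) : 0 ≤ p.1 :=
    h0 ▸ csInf_le (hK.image continuous_fst).bddBelow (mem_image_of_mem _ hp)
  obtain ⟨p, hp, hp0⟩ := h0 ▸ (hK.image continuous_fst).sInf_mem (hne.image _)
  have hclosed : IsClosed {b | ((0 : ℝ), b) ∈ K} := hK.isClosed.preimage (by fun_prop)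
  have hbdd : BddBelow {b | ((0 : ℝ), b) ∈ K} :=
    (hK.image continuous_snd).bddBelow.mono fun b (hb : ((0 : ℝ), b) ∈ K) =>
      mem_image_of_mem Prod.snd hb
  have hleast := hclosed.isLeast_csInf ⟨p.2, by rwa [← hp0]⟩ hbdd
  exact ⟨_, hleast, tendsto_sInf_image_add_mul_div hK hfst hleast⟩

end Planar

/-- if `A₀, A₁` are bounded self-adjoint operators on an infinite-dimensional
complex Hilbert space with `min W_e(A₀) = 0`, then `{s : ℝ | i s ∈ W_e(A₀ + i A₁)}` has a
least element `ω`, and `(min W_e(A₀ + t A₁))/t → ω` as `t → 0⁺`. -/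
theorem min_essNumRange_slope (hinf : ¬ FiniteDimensional ℂ H)
    (A₀ A₁ : H →L[ℂ] H) (hsa₀ : IsSelfAdjoint A₀) (hsa₁ : IsSelfAdjoint A₁)
    (h0 : sInf {s : ℝ | (s : ℂ) ∈ essNumRangeB A₀} = 0) :
    ∃ ω : ℝ,
      IsLeast {s : ℝ | Complex.I * (s : ℂ) ∈ essNumRangeB (A₀ + Complex.I • A₁)} ω ∧
      Tendsto (fun t : ℝ => sInf {s : ℝ | (s : ℂ) ∈ essNumRangeB (A₀ + (t : ℂ) • A₁)} / t)
        (𝓝[>] (0 : ℝ)) (𝓝 ω) := by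
  have hreal (t : ℝ) : {s : ℝ | (s : ℂ) ∈ essNumRangeB (A₀ + (t : ℂ) • A₁)} =
      (fun p : ℝ × ℝ => p.1 + t * p.2) '' jointEssNumRange A₀ A₁ := by
    ext s
    simp only [essNumRangeB_add_smul hsa₀ hsa₁, mem_ofPred_eq, mem_image]
    norm_cast
  have himag : {s : ℝ | Complex.I * (s : ℂ) ∈ essNumRangeB (A₀ + Complex.I • A₁)} =
      {b | ((0 : ℝ), b) ∈ jointEssNumRange A₀ A₁} := by
    ext s
    simp [essNumRangeB_add_smul hsa₀ hsa₁, Complex.ext_iff]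
  have hfst : sInf (Prod.fst '' jointEssNumRange A₀ A₁) = 0 := by
    have h := hreal 0
    simp only [Complex.ofReal_zero, zero_smul, add_zero, zero_mul] at h
    rwa [h] at h0
  obtain ⟨ω, hω, hlim⟩ := exists_isLeast_and_tendsto_sInf_image_add_mul_div
    isCompact_jointEssNumRange (jointEssNumRange_nonempty hinf) hfst
  exact ⟨ω, himag ▸ hω, by simpa only [hreal] using hlim⟩
end
end

section
/- Let θ ∈ ℝ and n ∈ ℤ with 2θ + 2nπ ≠ 0, and set λ_n = sin θ / (2θ + 2nπ) and f_n(s) = exp(−i s (2θ + 2nπ)) for s ∈ [0,1]. Then for every x ∈ [0,1], (1/2) e^{−iθ} ∫₀ˣ f_n(s) ds + (1/2) e^{iθ} ∫ₓ¹ f_n(s) ds = λ_n f_n(x). (Thus f_n is a unit eigenfunction of the operator V(θ) = (1/2)(e^{−iθ}V + e^{iθ}V*), the real part of e^{−iθ} times the Volterra operator on L²(0,1), with eigenvalue λ_n.) -/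
open Complex

theorem integral_exp_volterra_add_adjoint {c α β : ℂ} (hc : c ≠ 0) (hαβ : β * exp c = α)
    (x : ℝ) :
    α * (∫ s in (0 : ℝ)..x, exp (c * s)) + β * ∫ s in x..(1 : ℝ), exp (c * s) =
      (α - β) / c * exp (c * x) := by
  rw [integral_exp_mul_complex hc, integral_exp_mul_complex hc, ← hαβ]
  simp only [ofReal_zero, ofReal_one, mul_zero, mul_one, exp_zero]
  field_simp
  ring

/-- the functions `f_n(s) = exp(-i s (2θ + 2nπ))` are unit eigenfunctions of
`V(θ) = (1/2)(e^{-iθ} V + e^{iθ} V*)`, the real part of `e^{-iθ}` times the Volterra operator,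
with eigenvalues `λ_n = sin θ / (2θ + 2nπ)`: pointwise, for every `x ∈ [0, 1]`,
`(1/2) e^{-iθ} ∫₀ˣ f_n + (1/2) e^{iθ} ∫ₓ¹ f_n = λ_n f_n(x)`. -/
theorem volterra_eigenfunction (θ : ℝ) (n : ℤ)
    (h : 2 * θ + 2 * (n : ℝ) * Real.pi ≠ 0) :
    ∀ x ∈ Set.Icc (0 : ℝ) 1,
      (1 / 2 : ℂ) * Complex.exp (-Complex.I * (θ : ℂ)) *
          (∫ s in (0 : ℝ)..x,
            Complex.exp (-Complex.I * (s : ℂ) * ((2 * θ + 2 * (n : ℝ) * Real.pi : ℝ) : ℂ))) +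
        (1 / 2 : ℂ) * Complex.exp (Complex.I * (θ : ℂ)) *
          (∫ s in x..(1 : ℝ),
            Complex.exp (-Complex.I * (s : ℂ) * ((2 * θ + 2 * (n : ℝ) * Real.pi : ℝ) : ℂ))) =
      ((Real.sin θ / (2 * θ + 2 * (n : ℝ) * Real.pi) : ℝ) : ℂ) *
        Complex.exp (-Complex.I * (x : ℂ) * ((2 * θ + 2 * (n : ℝ) * Real.pi : ℝ) : ℂ)) := by
  intro x _
  set a : ℝ := 2 * θ + 2 * (n : ℝ) * Real.pi
  have ha : (a : ℂ) ≠ 0 := ofReal_ne_zero.mpr h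
  have hc : -I * a ≠ 0 := mul_ne_zero (neg_ne_zero.mpr I_ne_zero) ha
  -- `e^{-ia} = e^{-2iθ}` because `a` differs from `2θ` by a multiple of `2π`.
  have hperiod : 1 / 2 * exp (I * θ) * exp (-I * a) = 1 / 2 * exp (-I * θ) := by
    rw [mul_assoc, ← exp_add,
      show I * θ + -I * a = -I * θ + (-n : ℤ) * (2 * Real.pi * I) by push_cast [a]; ring,
      exp_add, exp_int_mul_two_pi_mul_I, mul_one]
  have heigen : (1 / 2 * exp (-I * θ) - 1 / 2 * exp (I * θ)) / (-I * a) =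
      ((Real.sin θ / a : ℝ) : ℂ) := by
    rw [ofReal_div, ofReal_sin, sin, neg_mul, mul_comm I]
    field_simp
    ring_nf
    rw [I_sq]
    ring
  simp_rw [show ∀ s : ℝ, -I * s * a = -I * a * s from fun s ↦ by ring]
  rw [integral_exp_volterra_add_adjoint hc hperiod, heigen]
end

section
/- For λ < 0 define f_a(λ) = 1/(−λ) + Σ_{n=1}^∞ (3/4ⁿ)/(e^{−(4n)²} − λ) and f_b(λ) = 1/(−λ) + (1/2)/(e^{−2} − λ) + Σ_{n=1}^∞ (3/(2·4ⁿ))/(e^{−(4n+2)²} − λ). Then for every integer n ≥ 1: f_a(−e^{−(4n+1)²}) < f_b(−e^{−(4n+1)²}) and f_b(−e^{−(4n+3)²}) < f_a(−e^{−(4n+3)²}). -/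
open Filter Topology

noncomputable section

/-- `f_a(λ) = 1/(-λ) + Σ_{n≥1} (3/4ⁿ)/(e^{-(4n)²} - λ)`. -/
def fa (lam : ℝ) : ℝ :=
  1 / (-lam) +
    ∑' n : ℕ, (3 / 4 ^ (n + 1)) / (Real.exp (-((4 * ((n : ℝ) + 1)) ^ 2)) - lam)

/-- `f_b(λ) = 1/(-λ) + (1/2)/(e^{-2} - λ) + Σ_{n≥1} (3/(2·4ⁿ))/(e^{-(4n+2)²} - λ)`. -/
def fb (lam : ℝ) : ℝ :=
  1 / (-lam) + (1 / 2) / (Real.exp (-2) - lam) +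
    ∑' n : ℕ, (3 / (2 * 4 ^ (n + 1))) / (Real.exp (-((4 * ((n : ℝ) + 1) + 2) ^ 2)) - lam)

/-!
At `λ = -e^{-X}` a term `w / (e^{-y} + e^{-X})` is at most `w e^{y}` and at most `w e^{X}`, and
it is at least `(5/6) w e^{X}` once `y ≥ X + 4`. At `X = (4n+1)²` the `a`-terms with `y ≤ (4n)²`
add up to at most `e^{(4n)²}`, negligible against `e^{X}/4ⁿ` because `X - (4n)² = 8n + 1`
outgrows `log 4ⁿ`; the remaining `a`-terms add up to at most `e^{X}/4ⁿ`, less than the single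
`b`-term at `y = (4n+2)²`, which is at least `(5/4) e^{X}/4ⁿ`. At `X = (4n+3)²` the roles are
exchanged, the `a`-term at `y = (4n+4)²` beating the whole `b`-side.
-/

open Real Finset

section ResolventSeries

variable {w d : ℕ → ℝ} {μ : ℝ}

lemma summable_div_sub_of_neg (hμ : μ < 0) (hw0 : ∀ m, 0 ≤ w m) (hw : Summable w)
    (hd : ∀ m, 0 ≤ d m) : Summable fun m => w m / (d m - μ) :=
  (hw.div_const (-μ)).of_nonneg_of_le (fun m => div_nonneg (hw0 m) (by linarith [hd m]))
    fun m => div_le_div_of_nonneg_left (hw0 m) (by linarith) (by linarith [hd m])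

lemma tsum_div_sub_le (hμ : μ < 0) (hw0 : ∀ m, 0 ≤ w m) (hw : Summable w)
    (hd : ∀ m, 0 < d m) (K : ℕ) :
    ∑' m, w m / (d m - μ) ≤ ∑ m ∈ range K, w m / d m + (∑' m, w (m + K)) / -μ := by
  have hs := summable_div_sub_of_neg hμ hw0 hw fun m => (hd m).le
  rw [← hs.sum_add_tsum_nat_add K, ← tsum_div_const]
  refine add_le_add (sum_le_sum fun m _ => ?_) (Summable.tsum_le_tsum (fun m => ?_)
    ((summable_nat_add_iff K).2 hs) (((summable_nat_add_iff K).2 hw).div_const _))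
  · exact div_le_div_of_nonneg_left (hw0 m) (hd m) (by linarith)
  · exact div_le_div_of_nonneg_left (hw0 _) (by linarith) (by linarith [hd (m + K)])

lemma div_le_tsum_div_sub (hμ : μ < 0) (hw0 : ∀ m, 0 ≤ w m) (hw : Summable w)
    (hd : ∀ m, 0 ≤ d m) {j : ℕ} {δ : ℝ} (hδ : d j ≤ δ * -μ) :
    w j / ((1 + δ) * -μ) ≤ ∑' m, w m / (d m - μ) :=
  (div_le_div_of_nonneg_left (hw0 j) (by linarith [hd j]) (by linarith)).trans
    ((summable_div_sub_of_neg hμ hw0 hw hd).le_tsum j fun m _ => div_nonneg (hw0 m)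
      (by linarith [hd m]))

end ResolventSeries

section GeometricWeights

lemma summable_geom_weight (C : ℝ) : Summable fun m : ℕ => C / 4 ^ (m + 1) := by
  simpa [div_eq_mul_inv, pow_succ, mul_assoc] using
    ((summable_geometric_of_lt_one (by norm_num : (0 : ℝ) ≤ 4⁻¹) (by norm_num)).mul_left
      (C / 4))

lemma tsum_geom_weight_add (C : ℝ) (K : ℕ) :
    ∑' m : ℕ, C / 4 ^ (m + K + 1) = C / (3 * 4 ^ K) := by
  have h : ∀ m : ℕ, C / 4 ^ (m + K + 1) = C / 4 ^ (K + 1) * (1 / 4) ^ m := fun m => by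
    rw [pow_add, pow_add, one_div_pow]; field_simp; ring
  simp_rw [h]
  rw [tsum_mul_left, tsum_geometric_of_lt_one (by norm_num) (by norm_num), pow_succ]
  field_simp
  norm_num

lemma sum_range_geom_weight_le {C : ℝ} (hC : 0 ≤ C) (K : ℕ) :
    ∑ m ∈ range K, C / 4 ^ (m + 1) ≤ C / 3 := by
  simpa using ((summable_geom_weight C).sum_le_tsum (range K) fun m _ => by positivity).trans_eq
    (tsum_geom_weight_add C 0)

def geomResolventSeries (C : ℝ) (y : ℕ → ℝ) (lam : ℝ) : ℝ :=
  ∑' m : ℕ, C / 4 ^ (m + 1) / (exp (-y m) - lam)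

variable {C : ℝ} {y : ℕ → ℝ}

lemma geomResolventSeries_le (hC : 0 ≤ C) (X : ℝ) (K : ℕ) {Y : ℝ}
    (hY : ∀ m < K, y m ≤ Y) :
    geomResolventSeries C y (-exp (-X)) ≤ C / 3 * (exp Y + exp X / 4 ^ K) := by
  have hhead : ∑ m ∈ range K, C / 4 ^ (m + 1) / exp (-y m) ≤ C / 3 * exp Y := by
    calc ∑ m ∈ range K, C / 4 ^ (m + 1) / exp (-y m)
        ≤ ∑ m ∈ range K, C / 4 ^ (m + 1) * exp Y := sum_le_sum fun m hm => by
          rw [div_eq_mul_inv, ← exp_neg, neg_neg]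
          gcongr
          exact hY m (mem_range.1 hm)
      _ ≤ C / 3 * exp Y := by
          rw [← sum_mul]; gcongr; exact sum_range_geom_weight_le hC K
  calc geomResolventSeries C y (-exp (-X))
      ≤ ∑ m ∈ range K, C / 4 ^ (m + 1) / exp (-y m)
          + (∑' m : ℕ, C / 4 ^ (m + K + 1)) / -(-exp (-X)) :=
        tsum_div_sub_le (neg_lt_zero.2 (exp_pos _)) (fun m => by positivity)
          (summable_geom_weight C) (fun m => exp_pos _) K
    _ ≤ C / 3 * exp Y + C / (3 * 4 ^ K) / exp (-X) := by
        rw [tsum_geom_weight_add, neg_neg]; gcongr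
    _ = C / 3 * (exp Y + exp X / 4 ^ K) := by
        rw [exp_neg]; field_simp

lemma le_geomResolventSeries (hC : 0 ≤ C) {X : ℝ} {j : ℕ} (hj : X + 4 ≤ y j) :
    5 / 6 * (C / 4 ^ (j + 1)) * exp X ≤ geomResolventSeries C y (-exp (-X)) := by
  have hδ : exp (-y j) ≤ 1 / 5 * -(-exp (-X)) := by
    have h5 : 5 ≤ exp (y j - X) := by linarith [add_one_le_exp (y j - X)]
    have hsplit : exp (-X) = exp (-y j) * exp (y j - X) := by rw [← exp_add]; ring_nf
    nlinarith [exp_pos (-y j)]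
  calc 5 / 6 * (C / 4 ^ (j + 1)) * exp X
      = C / 4 ^ (j + 1) / ((1 + 1 / 5) * -(-exp (-X))) := by
        rw [neg_neg, exp_neg]; field_simp; ring
    _ ≤ geomResolventSeries C y (-exp (-X)) :=
        div_le_tsum_div_sub (w := fun m => C / 4 ^ (m + 1)) (neg_lt_zero.2 (exp_pos _))
          (fun m => by positivity) (summable_geom_weight C) (fun m => (exp_pos _).le) hδ

end GeometricWeights

lemma fa_eq (lam : ℝ) :
    fa lam = 1 / -lam + geomResolventSeries 3 (fun m => (4 * ((m : ℝ) + 1)) ^ 2) lam := rfl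

lemma fb_eq (lam : ℝ) :
    fb lam = 1 / -lam + 1 / 2 / (exp (-2) - lam)
      + geomResolventSeries (3 / 2) (fun m => (4 * ((m : ℝ) + 1) + 2) ^ 2) lam := by
  simp only [fb, geomResolventSeries, div_mul_eq_div_div]

lemma four_pow_mul_exp_lt {k : ℕ} {a b : ℝ} (h : a + 2 * k < b) : 4 ^ k * exp a < exp b := by
  have h4 : (4 : ℝ) ≤ exp 2 := by
    have := add_one_le_exp (1 : ℝ)
    rw [show (2 : ℝ) = 1 + 1 by norm_num, exp_add]
    nlinarith
  calc 4 ^ k * exp a ≤ exp 2 ^ k * exp a := by gcongr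
    _ = exp (a + 2 * k) := by rw [← exp_nat_mul, ← exp_add]; ring_nf
    _ < exp b := exp_lt_exp.2 h

lemma fa_lt_fb (n : ℕ) (hn : 1 ≤ n) :
    fa (-exp (-((4 * (n : ℝ) + 1) ^ 2))) < fb (-exp (-((4 * (n : ℝ) + 1) ^ 2))) := by
  set X := (4 * (n : ℝ) + 1) ^ 2
  have hpred : ((n - 1 : ℕ) : ℝ) + 1 = n := by rw [Nat.cast_sub hn]; ring
  have upper := geomResolventSeries_le (y := fun m => (4 * ((m : ℝ) + 1)) ^ 2) (C := 3)
    (by norm_num) X n (Y := (4 * (n : ℝ)) ^ 2) fun m hm => by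
      have : (m : ℝ) + 1 ≤ n := by exact_mod_cast hm
      gcongr
  have lower := le_geomResolventSeries (y := fun m => (4 * ((m : ℝ) + 1) + 2) ^ 2) (X := X)
    (j := n - 1) (C := 3 / 2) (by norm_num) (by simp only [hpred, X]; nlinarith)
  rw [Nat.sub_add_cancel hn] at lower
  have hhalf : 0 < 1 / 2 / (exp (-2) - -exp (-X)) := by rw [sub_neg_eq_add]; positivity
  have hgap : 4 ^ (n + 1) * exp ((4 * (n : ℝ)) ^ 2) < exp X :=
    four_pow_mul_exp_lt (by push_cast; nlinarith)
  have hsmall : exp ((4 * (n : ℝ)) ^ 2) < exp X / 4 ^ n / 4 := by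
    rw [pow_succ] at hgap
    rw [div_div, lt_div_iff₀ (by positivity)]; linarith
  rw [fa_eq, fb_eq]
  have hrw : 5 / 6 * (3 / 2 / 4 ^ n) * exp X = 5 / 4 * (exp X / 4 ^ n) := by ring
  linarith

lemma fb_lt_fa (n : ℕ) :
    fb (-exp (-((4 * (n : ℝ) + 3) ^ 2))) < fa (-exp (-((4 * (n : ℝ) + 3) ^ 2))) := by
  set X := (4 * (n : ℝ) + 3) ^ 2
  have hn : (0 : ℝ) ≤ n := n.cast_nonneg
  have upper := geomResolventSeries_le (y := fun m => (4 * ((m : ℝ) + 1) + 2) ^ 2) (C := 3 / 2)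
    (by norm_num) X n (Y := (4 * (n : ℝ) + 2) ^ 2) fun m hm => by
      have : (m : ℝ) + 1 ≤ n := by exact_mod_cast hm
      gcongr
  have lower := le_geomResolventSeries (y := fun m => (4 * ((m : ℝ) + 1)) ^ 2) (X := X)
    (j := n) (C := 3) (by norm_num) (by simp only [X]; nlinarith)
  have hhalf : 1 / 2 / (exp (-2) - -exp (-X)) ≤ 1 / 2 * exp ((4 * (n : ℝ) + 2) ^ 2) := by
    calc 1 / 2 / (exp (-2) - -exp (-X)) ≤ 1 / 2 / exp (-2) := by
          gcongr; linarith [exp_pos (-X)]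
      _ = 1 / 2 * exp 2 := by rw [exp_neg]; field_simp
      _ ≤ 1 / 2 * exp ((4 * (n : ℝ) + 2) ^ 2) := by gcongr; nlinarith
  have hgap : 4 ^ (n + 2) * exp ((4 * (n : ℝ) + 2) ^ 2) < exp X :=
    four_pow_mul_exp_lt (by push_cast; nlinarith)
  have hsmall : exp ((4 * (n : ℝ) + 2) ^ 2) < exp X / 4 ^ n / 16 := by
    rw [pow_add] at hgap
    rw [div_div, lt_div_iff₀ (by positivity)]; linarith
  rw [fa_eq, fb_eq]
  have hrw : 5 / 6 * (3 / 4 ^ (n + 1)) * exp X = 5 / 8 * (exp X / 4 ^ n) := by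
    rw [pow_succ]; field_simp; ring
  linarith [exp_pos ((4 * (n : ℝ) + 2) ^ 2)]

/-- the functions `f_a` and `f_b` cross infinitely often: for every `n ≥ 1`,
`f_a < f_b` at `λ = -e^{-(4n+1)²}` and `f_b < f_a` at `λ = -e^{-(4n+3)²}`. -/
theorem fa_fb_crossings :
    ∀ n : ℕ, 1 ≤ n →
      fa (-Real.exp (-((4 * (n : ℝ) + 1) ^ 2))) < fb (-Real.exp (-((4 * (n : ℝ) + 1) ^ 2))) ∧
      fb (-Real.exp (-((4 * (n : ℝ) + 3) ^ 2))) < fa (-Real.exp (-((4 * (n : ℝ) + 3) ^ 2))) :=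
  fun n hn => ⟨fa_lt_fb n hn, fb_lt_fa n⟩
end
end
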